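/- arXiv:2305.15489 — 3 statements merged into one kernel-verified Lean document; each statement's English description precedes it below -/
import Mathlib

section
/- For every n ≥ 1, there is a language L_n over an alphabet of size n+2 such that L_n is recognized by a semantically deterministic transition-based nondeterministic Büchi automaton with 3n+3 states, but every deterministic transition-based Büchi automaton recognizing L_n has at least 2^n states. -/
/-!
Upper bound: on reading `$` the automaton guesses the letter `i` that is to end the good infix,
checks that `i` occurs before the next `#` and right after it, and otherwise idles. A new guess is
possible at every `$`, so every state recognizes `L_n` and the automaton is semantically
deterministic.

Lower bound: call a word neutral if it is a concatenation of blocks `$x#` and `$x#i` with `i ∉ x`.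
Neutral words have no good infix, so a tDBW for `L_n` rejects every ultimately periodic word with a
neutral period; hence some reachable state `z` is safe: no neutral word read from `z` traverses
`α`. With fewer than `2^n` states, for every safe `z` there are sets `S`, `T` and `i ∈ S \ T` such
that `$S` and `$T` lead from `z` to the same state. Iterating gives a cycle of blocks `$S#i`,
whose word is in `L_n`, next to a cycle of blocks `$T#i` through the same states, whose word is
neutral. By safety, every `α`-transition on the first cycle lies on a shared suffix `#i`, so the
second cycle is accepted as well, a contradiction.
-/

open Filter

variable {A Q : Type}

/-- Extension of a transition function to sets of states and finite words. -/
def extSet (δ : Q → A → Set Q) : Set Q → List A → Set Q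
  | S, [] => S
  | S, a :: u => extSet δ (⋃ q ∈ S, δ q a) u

/-- A nondeterministic automaton on finite words (NFW), with a total
transition function. -/
structure NFW (A Q : Type) where
  init : Set Q
  δ : Q → A → Set Q
  F : Set Q
  init_nonempty : init.Nonempty
  δ_nonempty : ∀ q a, (δ q a).Nonempty

/-- The language of finite words recognized by an NFW. -/
def NFW.Lang (N : NFW A Q) : Set (List A) :=
  {u | ∃ q ∈ extSet N.δ N.init u, q ∈ N.F}

/-- A transition-based nondeterministic Büchi automaton (tNBW). -/
structure tNBW (A Q : Type) where
  init : Set Q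
  δ : Q → A → Set Q
  α : Set (Q × A × Q)
  init_nonempty : init.Nonempty
  δ_nonempty : ∀ q a, (δ q a).Nonempty

namespace tNBW

/-- `L(A^q)`: words having a run from `q` traversing `α`-transitions
infinitely often. -/
def LangFrom (M : tNBW A Q) (q : Q) : Set (ℕ → A) :=
  {w | ∃ r : ℕ → Q, r 0 = q ∧ (∀ i, r (i + 1) ∈ M.δ (r i) (w i)) ∧
    ∃ᶠ i in atTop, (r i, w i, r (i + 1)) ∈ M.α}

def Lang (M : tNBW A Q) : Set (ℕ → A) :=
  {w | ∃ q ∈ M.init, w ∈ M.LangFrom q}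

/-- Semantic determinism. -/
def SD (M : tNBW A Q) : Prop :=
  (∀ q₁ ∈ M.init, ∀ q₂ ∈ M.init, M.LangFrom q₁ = M.LangFrom q₂) ∧
  ∀ q a, ∀ q₁ ∈ M.δ q a, ∀ q₂ ∈ M.δ q a, M.LangFrom q₁ = M.LangFrom q₂

end tNBW

/-- The infix `w[i..i+len-1]` of an infinite word. -/
def seg (w : ℕ → A) (i len : ℕ) : List A := List.ofFn fun k : Fin len => w (i + k)

/-- `∞R`: the words containing infinitely many disjoint infixes in `R`
(equivalently, `ε ∈ R`, or for every position there is an infix in `R`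
starting beyond it). -/
def InfInfix (R : Set (List A)) : Set (ℕ → A) :=
  {w | ∀ N, ∃ i len, N ≤ i ∧ seg w i len ∈ R}


/-- A transition-based deterministic Büchi automaton (tDBW). -/
structure tDBW (A Q : Type) where
  q0 : Q
  δ : Q → A → Q

def tDBW.run (D : tDBW A Q) (w : ℕ → A) : ℕ → Q
  | 0 => D.q0
  | i + 1 => D.δ (D.run w i) (w i)

def tDBW.Lang (D : tDBW A Q) (α : Set (Q × A × Q)) : Set (ℕ → A) :=
  {w | ∃ᶠ i in atTop, (D.run w i, w i, D.run w (i + 1)) ∈ α}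

/-- The alphabet `Σ_n = {1,…,n, $, #}` of size `n+2`: `Sum.inr true` is `$`
and `Sum.inr false` is `#`. -/
abbrev Sig (n : ℕ) := Fin n ⊕ Bool

/-- A good word `$ · x · # · i` with `x ∈ [n]⁺` and `i` occurring in `x`. -/
def GoodWord (n : ℕ) : Set (List (Sig n)) :=
  {z | ∃ (x : List (Fin n)) (i : Fin n), x ≠ [] ∧ i ∈ x ∧
    z = Sum.inr true :: x.map Sum.inl ++ [Sum.inr false, Sum.inl i]}

/-- `L_n = ∞R_n`, for `R_n` the set of good words. -/
def Ln (n : ℕ) : Set (ℕ → Sig n) := InfInfix (GoodWord n)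

namespace tNBW

variable {M : tNBW A Q} {L : Set (ℕ → A)}

lemma sd_of_langFrom_eq (h : ∀ q, M.LangFrom q = L) : M.SD :=
  ⟨fun q₁ _ q₂ _ => (h q₁).trans (h q₂).symm, fun _ _ q₁ _ q₂ _ => (h q₁).trans (h q₂).symm⟩

lemma lang_eq_of_langFrom_eq (h : ∀ q, M.LangFrom q = L) : M.Lang = L := by
  obtain ⟨q₀, hq₀⟩ := M.init_nonempty
  ext w
  simp only [Lang, Set.mem_ofPred_eq, h]
  exact ⟨fun ⟨_, _, hw⟩ => hw, fun hw => ⟨q₀, hq₀, hw⟩⟩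

end tNBW

local notation "＄" => Sum.inr true
local notation "＃" => Sum.inr false

section Infix

@[simp] lemma seg_length (w : ℕ → A) (i k : ℕ) : (seg w i k).length = k :=
  List.length_ofFn

lemma seg_add (w : ℕ → A) (i k l : ℕ) : seg w i (k + l) = seg w i k ++ seg w (i + k) l := by
  simp [seg, List.ofFn_add, Nat.add_assoc]

lemma seg_succ (w : ℕ → A) (i k : ℕ) : seg w i (k + 1) = seg w i k ++ [w (i + k)] := by
  rw [seg_add]
  simp [seg]

lemma seg_append_stream (x : List A) (s : Stream' A) (m k : ℕ) :
    seg (x ++ₛ s).get (x.length + m) k = seg s.get m k := by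
  simp only [seg, Nat.add_assoc]
  exact congrArg List.ofFn (funext fun t => Stream'.get_append_right _ x s)

lemma seg_append_stream_zero (x : List A) (s : Stream' A) : seg (x ++ₛ s).get 0 x.length = x :=
  List.ext_getElem (by simp) fun t _ ht => by
    simpa [seg] using Stream'.get_append_left t x s ht

lemma seg_cycle_add (u : List A) (hu : u ≠ []) (j m k : ℕ) :
    seg (Stream'.cycle u hu).get (j * u.length + m) k = seg (Stream'.cycle u hu).get m k := by
  induction j with
  | zero => simp
  | succ j ih =>
    rw [Nat.succ_mul, Nat.add_comm (j * u.length), Nat.add_assoc]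
    conv_lhs => rw [Stream'.cycle_eq]
    rw [seg_append_stream, ih]

lemma seg_cycle_zero (u : List A) (hu : u ≠ []) :
    seg (Stream'.cycle u hu).get 0 u.length = u := by
  conv_lhs => rw [Stream'.cycle_eq]
  exact seg_append_stream_zero u _

end Infix

lemma exists_iterate_cycle {X : Type*} [Finite X] (f : X → X) (x : X) :
    ∃ j c, 0 < c ∧ f^[c] (f^[j] x) = f^[j] x := by
  obtain ⟨a, b, hab, he⟩ := Finite.exists_ne_map_eq_of_infinite fun k : ℕ => f^[k] x
  rcases Nat.lt_or_gt_of_ne hab with h | h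
  · refine ⟨a, b - a, by omega, ?_⟩
    rw [← Function.iterate_add_apply, Nat.sub_add_cancel h.le]
    exact he.symm
  · refine ⟨b, a - b, by omega, ?_⟩
    rw [← Function.iterate_add_apply, Nat.sub_add_cancel h.le]
    exact he

def blockChain (blk : Q → List A) (ψ : Q → Q) : Q → ℕ → List A
  | _, 0 => []
  | z, k + 1 => blk z ++ blockChain blk ψ (ψ z) k

lemma blockChain_ne_nil {blk : Q → List A} (hblk : ∀ z, blk z ≠ []) (ψ : Q → Q)
    (z : Q) {k : ℕ} (hk : 0 < k) : blockChain blk ψ z k ≠ [] := by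
  obtain ⟨k, rfl⟩ := Nat.exists_eq_add_of_lt hk
  simp [blockChain, hblk]

namespace tDBW

variable (D : tDBW A Q) (α : Set (Q × A × Q))

def evalFrom (q : Q) (u : List A) : Q := u.foldl D.δ q

def path : Q → List A → List (Q × A × Q)
  | _, [] => []
  | q, a :: u => (q, a, D.δ q a) :: path (D.δ q a) u

def Visits (q : Q) (u : List A) : Prop := ∃ e ∈ D.path q u, e ∈ α

variable {D α}

lemma evalFrom_append (q : Q) (u v : List A) :
    D.evalFrom q (u ++ v) = D.evalFrom (D.evalFrom q u) v :=
  List.foldl_append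

lemma path_append (q : Q) (u v : List A) :
    D.path q (u ++ v) = D.path q u ++ D.path (D.evalFrom q u) v := by
  induction u generalizing q with
  | nil => rfl
  | cons a u ih => simp [path, ih, evalFrom]

lemma visits_append {q : Q} {u v : List A} :
    D.Visits α q (u ++ v) ↔ D.Visits α q u ∨ D.Visits α (D.evalFrom q u) v := by
  simp only [Visits, path_append, List.mem_append, or_and_right, exists_or]

lemma Visits.ne_nil {q : Q} {u : List A} (h : D.Visits α q u) : u ≠ [] := by
  rintro rfl
  simp [Visits, path] at h

lemma run_add (w : ℕ → A) (m k : ℕ) : D.run w (m + k) = D.evalFrom (D.run w m) (seg w m k) := by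
  induction k with
  | zero => simp [seg, evalFrom]
  | succ k ih => rw [← Nat.add_assoc, run, ih, seg_succ, evalFrom_append]; rfl

lemma path_run_seg (w : ℕ → A) (m k : ℕ) :
    D.path (D.run w m) (seg w m k) =
      List.ofFn fun t : Fin k => (D.run w (m + t), w (m + t), D.run w (m + t + 1)) := by
  induction k generalizing m with
  | zero => simp [seg, path]
  | succ k ih =>
    have hs : seg w m (k + 1) = w m :: seg w (m + 1) k := by
      simp [seg, List.ofFn_succ, Nat.add_assoc, Nat.add_comm 1]
    rw [hs, List.ofFn_succ]
    change _ :: D.path (D.run w (m + 1)) _ = _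
    rw [ih]
    simp only [Fin.val_succ, Fin.val_zero, Nat.add_zero,
      show ∀ t : ℕ, m + 1 + t = m + (t + 1) from fun t => by omega]
    rfl

lemma visits_run_seg_iff (w : ℕ → A) (m k : ℕ) :
    D.Visits α (D.run w m) (seg w m k) ↔
      ∃ t < k, (D.run w (m + t), w (m + t), D.run w (m + t + 1)) ∈ α := by
  simp [Visits, path_run_seg, List.mem_ofFn, Fin.exists_iff]

theorem mem_lang_append_cycle_iff {v u : List A} {q : Q} (hv : D.evalFrom D.q0 v = q)
    (hu : D.evalFrom q u = q) (hne : u ≠ []) :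
    (v ++ₛ Stream'.cycle u hne).get ∈ D.Lang α ↔ D.Visits α q u := by
  set w : ℕ → A := (v ++ₛ Stream'.cycle u hne).get
  have hseg : ∀ j, seg w (v.length + j * u.length) u.length = u := fun j => by
    rw [seg_append_stream, ← Nat.add_zero (j * u.length), seg_cycle_add, seg_cycle_zero]
  have hrun : ∀ j, D.run w (v.length + j * u.length) = q := by
    intro j
    induction j with
    | zero =>
      have := D.run_add w 0 v.length
      rw [Nat.zero_add, seg_append_stream_zero] at this
      rw [Nat.zero_mul, Nat.add_zero, this]
      exact hv
    | succ j ih => rw [Nat.succ_mul, ← Nat.add_assoc, run_add, ih, hseg, hu]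
  have hblock : ∀ j, D.Visits α q u ↔ ∃ t < u.length,
      (D.run w (v.length + j * u.length + t), w (v.length + j * u.length + t),
        D.run w (v.length + j * u.length + t + 1)) ∈ α := fun j => by
    rw [← visits_run_seg_iff, hrun, hseg]
  rw [tDBW.Lang, Set.mem_ofPred_eq, frequently_atTop]
  constructor
  · intro h
    obtain ⟨m, hm, hα⟩ := h v.length
    have hdec := Nat.div_add_mod' (m - v.length) u.length
    refine (hblock ((m - v.length) / u.length)).2
      ⟨(m - v.length) % u.length, Nat.mod_lt _ (List.length_pos_iff.2 hne), ?_⟩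
    rwa [Nat.add_assoc, hdec, Nat.add_sub_cancel' hm]
  · intro h N
    obtain ⟨t, -, hα⟩ := (hblock N).1 h
    have : N ≤ N * u.length := Nat.le_mul_of_pos_right N (List.length_pos_iff.2 hne)
    exact ⟨_, by omega, hα⟩

lemma evalFrom_blockChain {blk : Q → List A} {ψ : Q → Q} (h : ∀ z, D.evalFrom z (blk z) = ψ z)
    (k : ℕ) (z : Q) : D.evalFrom z (blockChain blk ψ z k) = ψ^[k] z := by
  induction k generalizing z with
  | zero => rfl
  | succ k ih => rw [blockChain, evalFrom_append, h, ih, Function.iterate_succ_apply]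

lemma visits_blockChain_of_visits {good bad : Q → List A} {ψ : Q → Q} (P : Q → Prop)
    (hP : ∀ z, P z → P (ψ z)) (hgood : ∀ z, D.evalFrom z (good z) = ψ z)
    (hbad : ∀ z, D.evalFrom z (bad z) = ψ z)
    (hstep : ∀ z, P z → D.Visits α z (good z) → D.Visits α z (bad z)) (k : ℕ) (z : Q)
    (hz : P z) (h : D.Visits α z (blockChain good ψ z k)) :
    D.Visits α z (blockChain bad ψ z k) := by
  induction k generalizing z with
  | zero => exact h
  | succ k ih =>
    rw [blockChain, visits_append, hgood] at h
    rw [blockChain, visits_append, hbad]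
    exact h.imp (hstep z hz) (ih _ (hP z hz))

end tDBW

section Words

variable {n : ℕ}

def openBlock (x : List (Fin n)) : List (Sig n) := ＄ :: x.map Sum.inl

inductive Neutral : List (Sig n) → Prop
  | nil : Neutral []
  | cons {x : List (Fin n)} {d : Option (Fin n)} {r : List (Sig n)} :
      (∀ i ∈ d, i ∉ x) → Neutral r → Neutral (openBlock x ++ ＃ :: d.toList.map Sum.inl ++ r)

lemma Neutral.append {u v : List (Sig n)} (hu : Neutral u) (hv : Neutral v) : Neutral (u ++ v) := by
  induction hu with
  | nil => exact hv
  | cons hd _ ih => simpa [List.append_assoc] using Neutral.cons hd ih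

lemma Neutral.blockChain {blk : Q → List (Sig n)} (h : ∀ z, Neutral (blk z))
    (ψ : Q → Q) (k : ℕ) (z : Q) : Neutral (blockChain blk ψ z k) := by
  induction k generalizing z with
  | zero => exact .nil
  | succ k ih => exact (h z).append (ih _)

lemma Neutral.head_eq {u r : List (Sig n)} {c : Sig n} (h : Neutral u) (hu : u = c :: r) :
    c = ＄ := by
  cases h with
  | nil => simp at hu
  | cons => simp [openBlock] at hu; exact hu.1.symm

lemma exists_eq_append_cons_of_not_mem {c : A} {a r p q : List A} (ha : c ∉ a)
    (h : a ++ r = p ++ c :: q) : ∃ p', r = p' ++ c :: q := by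
  rcases List.append_eq_append_iff.1 h with ⟨p', -, hr⟩ | ⟨_ | ⟨b, bs⟩, rfl, hc⟩
  · exact ⟨p', hr⟩
  · exact ⟨[], by simpa using hc.symm⟩
  · simp only [List.cons_append, List.cons.injEq] at hc
    simp [← hc.1] at ha

lemma map_inl_append_inr_inj {α β : Type*} {x y : List α} {b : β} {r s : List (α ⊕ β)}
    (h : x.map Sum.inl ++ Sum.inr b :: r = y.map Sum.inl ++ Sum.inr b :: s) : x = y ∧ r = s := by
  induction x generalizing y with
  | nil => cases y <;> simp_all
  | cons a x ih =>
    cases y with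
    | nil => simp at h
    | cons a' y =>
      simp only [List.map_cons, List.cons_append, List.cons.injEq, Sum.inl.injEq] at h
      exact ⟨by rw [h.1, (ih h.2).1], (ih h.2).2⟩

theorem Neutral.not_mem_goodWord {u p g s : List (Sig n)} (h : Neutral u) (hu : u = p ++ g ++ s) :
    g ∉ GoodWord n := by
  rintro ⟨y, j, -, hjy, rfl⟩
  induction h generalizing p with
  | nil => simp at hu
  | @cons x d r hd hr ih =>
    cases p with
    | nil =>
      simp only [openBlock, List.cons_append, List.nil_append, List.cons.injEq, true_and,
        List.append_assoc] at hu
      obtain ⟨rfl, hrest⟩ := map_inl_append_inr_inj (by simpa using hu)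
      cases d with
      | none => simpa using hr.head_eq hrest
      | some i =>
        simp only [Option.toList_some, List.map_cons, List.map_nil, List.cons_append,
          List.nil_append, List.cons.injEq, Sum.inl.injEq] at hrest
        exact hd i rfl (hrest.1 ▸ hjy)
    | cons c p =>
      simp only [openBlock, List.cons_append, List.cons.injEq, List.append_assoc] at hu
      obtain ⟨p', rfl⟩ := exists_eq_append_cons_of_not_mem (c := ＄)
        (a := x.map Sum.inl ++ ＃ :: d.toList.map Sum.inl) (by simp) (by simpa using hu.2)
      exact ih (p := p') (by simp)

lemma Neutral.openBlock_hash (x : List (Fin n)) : Neutral (openBlock x ++ [＃]) := by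
  simpa using Neutral.cons (x := x) (d := none) (fun _ h => by simp at h) .nil

lemma Neutral.openBlock_hash_letter {x : List (Fin n)} {i : Fin n} (hi : i ∉ x) :
    Neutral (openBlock x ++ [＃, .inl i]) := by
  simpa using Neutral.cons (d := some i) (fun _ h => Option.mem_some_iff.1 h ▸ hi) .nil

lemma openBlock_hash_letter_mem_goodWord {x : List (Fin n)} {i : Fin n} (hi : i ∈ x) :
    openBlock x ++ [＃, .inl i] ∈ GoodWord n :=
  ⟨x, i, List.ne_nil_of_mem hi, hi, rfl⟩

lemma neutral_seg_cycle {u : List (Sig n)} (h : Neutral u) (hne : u ≠ []) (j : ℕ) :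
    Neutral (seg (Stream'.cycle u hne).get 0 (j * u.length)) := by
  induction j with
  | zero => simpa [seg] using Neutral.nil
  | succ j ih =>
    rw [Nat.succ_mul, seg_add, Nat.zero_add, ← Nat.add_zero (j * u.length), seg_cycle_add,
      seg_cycle_zero, Nat.add_zero]
    exact ih.append h

theorem append_cycle_not_mem_Ln {u : List (Sig n)} (h : Neutral u) (hne : u ≠ [])
    (v : List (Sig n)) : (v ++ₛ Stream'.cycle u hne).get ∉ Ln n := by
  intro hw
  obtain ⟨a, len, ha, hgood⟩ := hw v.length
  obtain ⟨m, rfl⟩ := Nat.exists_eq_add_of_le ha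
  rw [seg_append_stream] at hgood
  have hlen : m + len ≤ (m + len) * u.length :=
    Nat.le_mul_of_pos_right _ (List.length_pos_iff.2 hne)
  have hsplit := neutral_seg_cycle h hne (m + len)
  rw [← Nat.add_sub_cancel' hlen, seg_add, seg_add, Nat.zero_add] at hsplit
  exact hsplit.not_mem_goodWord rfl hgood

theorem append_cycle_mem_Ln {u p g s : List (Sig n)} (hu : u = p ++ g ++ s) (hg : g ∈ GoodWord n)
    (hne : u ≠ []) (v : List (Sig n)) : (v ++ₛ Stream'.cycle u hne).get ∈ Ln n := by
  subst hu
  have hinf : seg (Stream'.cycle _ hne).get p.length g.length = g := by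
    have h := seg_cycle_zero _ hne
    rw [show (p ++ g ++ s).length = p.length + g.length + s.length by simp [Nat.add_assoc],
      seg_add, seg_add, Nat.zero_add] at h
    exact (List.append_inj (List.append_inj' h (by simp)).1 (by simp)).2
  intro N
  refine ⟨v.length + (N * (p ++ g ++ s).length + p.length), g.length, ?_, ?_⟩
  · have : N ≤ N * (p ++ g ++ s).length := Nat.le_mul_of_pos_right _ (List.length_pos_iff.2 hne)
    omega
  · rwa [seg_append_stream, seg_cycle_add, hinf]

end Words

section LowerBound

variable {n : ℕ} (D : tDBW (Sig n) Q) (α : Set (Q × Sig n × Q))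

def Safe (z : Q) : Prop := ∀ u, Neutral u → ¬ D.Visits α z u

variable {D α}

lemma Safe.evalFrom {z : Q} (hz : Safe D α z) {u : List (Sig n)} (hu : Neutral u) :
    Safe D α (D.evalFrom z u) :=
  fun _ hu' h => hz _ (hu.append hu') (tDBW.visits_append.2 (Or.inr h))

/-- If no reachable state were safe, the neutral words witnessing this could be chained into a
neutral period whose loop traverses `α`. -/
lemma exists_safe [Finite Q] (hL : D.Lang α = Ln n) : ∃ v, Safe D α (D.evalFrom D.q0 v) := by
  by_contra! hunsafe
  have : ∀ z, ∃ u, Neutral u ∧ (¬ Safe D α z → D.Visits α z u) := fun z => by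
    by_cases hz : Safe D α z
    · exact ⟨[], .nil, fun h => (h hz).elim⟩
    · simp only [Safe, not_forall, not_not] at hz
      obtain ⟨u, hu, hv⟩ := hz
      exact ⟨u, hu, fun _ => hv⟩
  choose blk hneutral hvisits using this
  set ψ : Q → Q := fun z => D.evalFrom z (blk z)
  have hchain := D.evalFrom_blockChain (blk := blk) (ψ := ψ) fun _ => rfl
  obtain ⟨j, c, hc, hcyc⟩ := exists_iterate_cycle ψ D.q0
  obtain ⟨c, rfl⟩ : ∃ c', c = c' + 1 := ⟨c - 1, by omega⟩
  have hvis : D.Visits α (ψ^[j] D.q0) (blockChain blk ψ (ψ^[j] D.q0) (c + 1)) := by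
    rw [blockChain, tDBW.visits_append]
    exact Or.inl (hvisits _ (hchain j D.q0 ▸ hunsafe _))
  have hloop := (hchain _ _).trans hcyc
  have hacc := (tDBW.mem_lang_append_cycle_iff (hchain j D.q0) hloop hvis.ne_nil).2 hvis
  exact append_cycle_not_mem_Ln (Neutral.blockChain hneutral _ _ _) hvis.ne_nil _ (hL ▸ hacc)

lemma exists_collision [Fintype Q] (hcard : Fintype.card Q < 2 ^ n) (z : Q) :
    ∃ (S T : Finset (Fin n)) (i : Fin n), i ∈ S ∧ i ∉ T ∧
      D.evalFrom z (openBlock S.toList) = D.evalFrom z (openBlock T.toList) := by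
  obtain ⟨S, T, hST, heq⟩ := Fintype.exists_ne_map_eq_of_card_lt
    (fun S : Finset (Fin n) => D.evalFrom z (openBlock S.toList)) (by simpa using hcard)
  by_cases h : S ⊆ T
  · obtain ⟨i, hiT, hiS⟩ := Finset.not_subset.1 fun h' => hST (Finset.Subset.antisymm h h')
    exact ⟨T, S, i, hiT, hiS, heq.symm⟩
  · obtain ⟨i, hiS, hiT⟩ := Finset.not_subset.1 h
    exact ⟨S, T, i, hiS, hiT, heq⟩

lemma Safe.visits_of_collision {z : Q} (hz : Safe D α z) {x y : List (Fin n)} {i : Fin n}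
    (heq : D.evalFrom z (openBlock x) = D.evalFrom z (openBlock y))
    (h : D.Visits α z (openBlock x ++ [＃, .inl i])) :
    D.Visits α z (openBlock y ++ [＃, .inl i]) := by
  rw [tDBW.visits_append] at h ⊢
  refine .inr (heq ▸ h.resolve_left fun hx => hz _ (Neutral.openBlock_hash x) ?_)
  exact tDBW.visits_append.2 (.inl hx)

theorem two_pow_le_card [Fintype Q] (hL : D.Lang α = Ln n) : 2 ^ n ≤ Fintype.card Q := by
  by_contra! hcard
  obtain ⟨v₀, hsafe₀⟩ := exists_safe hL
  choose S T i hiS hiT hST using exists_collision (D := D) hcard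
  let good : Q → List (Sig n) := fun z => openBlock (S z).toList ++ [＃, .inl (i z)]
  let bad : Q → List (Sig n) := fun z => openBlock (T z).toList ++ [＃, .inl (i z)]
  let ψ : Q → Q := fun z => D.evalFrom z (bad z)
  have hgood : ∀ z, D.evalFrom z (good z) = ψ z := fun z => by
    simp only [good, ψ, bad, tDBW.evalFrom_append, hST]
  have hbad : ∀ z, Neutral (bad z) := fun z =>
    Neutral.openBlock_hash_letter (by simpa using hiT z)
  obtain ⟨j, c, hc, hcyc⟩ := exists_iterate_cycle ψ (D.evalFrom D.q0 v₀)
  have hz : Safe D α (ψ^[j] (D.evalFrom D.q0 v₀)) :=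
    Function.Iterate.rec (Safe D α) (f := ψ) hsafe₀ (fun z h => h.evalFrom (hbad z)) j
  have hreach : D.evalFrom D.q0 (v₀ ++ blockChain bad ψ (D.evalFrom D.q0 v₀) j) =
      ψ^[j] (D.evalFrom D.q0 v₀) := by
    rw [tDBW.evalFrom_append, D.evalFrom_blockChain (fun _ => rfl)]
  set z := ψ^[j] (D.evalFrom D.q0 v₀)
  obtain ⟨c, rfl⟩ : ∃ c', c = c' + 1 := ⟨c - 1, by omega⟩
  have hgood_ne := blockChain_ne_nil (blk := good) (by simp [good, openBlock]) ψ z hc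
  have hbad_ne := blockChain_ne_nil (blk := bad) (by simp [bad, openBlock]) ψ z hc
  have hvis_good : D.Visits α z (blockChain good ψ z (c + 1)) := by
    rw [← tDBW.mem_lang_append_cycle_iff hreach ((D.evalFrom_blockChain hgood _ _).trans hcyc)
      hgood_ne, hL]
    exact append_cycle_mem_Ln (p := []) rfl
      (openBlock_hash_letter_mem_goodWord (Finset.mem_toList.2 (hiS z))) _ _
  have hvis_bad := tDBW.visits_blockChain_of_visits (Safe D α) (fun z h => h.evalFrom (hbad z))
    hgood (fun _ => rfl) (fun z hz => hz.visits_of_collision (hST z)) _ z hz hvis_good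
  have hacc := (tDBW.mem_lang_append_cycle_iff hreach
    ((D.evalFrom_blockChain (fun _ => rfl) _ _).trans hcyc) hbad_ne).2 hvis_bad
  exact append_cycle_not_mem_Ln (Neutral.blockChain hbad _ _ _) hbad_ne _ (hL ▸ hacc)

end LowerBound

section Guessing

variable {n : ℕ}

/-- `inl (i, 0)`, `inl (i, 1)`, `inl (i, 2)`: the automaton has read `$ x`, with `i ∉ x` resp.
`i ∈ x`, resp. `$ x #` with `i ∈ x`, and waits for a final letter `i`. The three states `inr _`
are idle and behave alike. -/
abbrev GuessState (n : ℕ) := (Fin n × Fin 3) ⊕ Fin 3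

def guessStep (i : Fin n) : GuessState n → Sig n → GuessState n
  | _, ＄ => .inl (i, 0)
  | .inl (j, 0), .inl k => .inl (j, if k = j then 1 else 0)
  | .inl (j, 1), .inl _ => .inl (j, 1)
  | .inl (j, 1), ＃ => .inl (j, 2)
  | _, _ => .inr 0

def guessNBW (n : ℕ) [NeZero n] : tNBW (Sig n) (GuessState n) where
  init := {.inr 0}
  δ q c := Set.range fun i => guessStep i q c
  α := {e | ∃ i, e = (.inl (i, 2), .inl i, .inr 0)}
  init_nonempty := Set.singleton_nonempty _
  δ_nonempty _ _ := Set.range_nonempty _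

lemma guessStep_eq_of_ne {c : Sig n} (hc : c ≠ ＄) (i i' : Fin n) (q : GuessState n) :
    guessStep i q c = guessStep i' q c := by
  rcases c with k | _ | _ <;> rcases q with ⟨j, r⟩ | r <;> try fin_cases r
  all_goals first | rfl | simp at hc

lemma foldl_guessStep_seen (i j : Fin n) (x : List (Fin n)) :
    (x.map Sum.inl).foldl (guessStep i) (.inl (j, 1)) = .inl (j, 1) := by
  induction x <;> simp [guessStep, *]

lemma foldl_guessStep_unseen (i j : Fin n) (x : List (Fin n)) :
    (x.map Sum.inl).foldl (guessStep i) (.inl (j, 0)) = .inl (j, if j ∈ x then 1 else 0) := by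
  induction x with
  | nil => simp
  | cons k x ih =>
    by_cases hk : k = j
    · simp [guessStep, hk, foldl_guessStep_seen]
    · simp [guessStep, hk, ih, Ne.symm hk]

/-- What has been read since the last `$`, for a run that was idle at some point. -/
def guessHist : GuessState n → Set (List (Sig n))
  | .inl (_, 0) => {u | ∃ x : List (Fin n), u = openBlock x}
  | .inl (j, 1) => {u | ∃ x : List (Fin n), j ∈ x ∧ u = openBlock x}
  | .inl (j, 2) => {u | ∃ x : List (Fin n), j ∈ x ∧ u = openBlock x ++ [＃]}
  | .inr _ => Set.univ

lemma guessHist_guessStep (i : Fin n) (q : GuessState n) (c : Sig n) :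
    [c] ∈ guessHist (guessStep i q c) ∨
      ∀ u ∈ guessHist q, u ++ [c] ∈ guessHist (guessStep i q c) := by
  rcases c with k | _ | _ <;> rcases q with ⟨j, r⟩ | r <;> try fin_cases r
  all_goals try by_cases hk : k = j
  all_goals simp [guessStep, guessHist, openBlock, *]
  all_goals first
    | exact fun x => ⟨x ++ [k], by simp_all⟩
    | (rintro _ x hx rfl; exact ⟨x ++ [k], by simp_all⟩)
    | (rintro _ x hx rfl; exact ⟨x, hx, by simp⟩)

lemma guessRun_eq_foldl {w : ℕ → Sig n} {g : ℕ → Fin n} {r : ℕ → GuessState n}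
    (hr : ∀ m, r (m + 1) = guessStep (g m) (r m) (w m)) (i : Fin n) (m : ℕ) {k : ℕ}
    (hk : ＄ ∉ seg w m k) : r (m + k) = (seg w m k).foldl (guessStep i) (r m) := by
  induction k with
  | zero => simp [seg]
  | succ k ih =>
    rw [seg_succ, List.mem_append, not_or, List.mem_singleton] at hk
    rw [← Nat.add_assoc, hr, ih hk.1, seg_succ, List.foldl_append, List.foldl_cons,
      List.foldl_nil, guessStep_eq_of_ne (Ne.symm hk.2)]

variable [NeZero n]

lemma exists_seg_mem_guessHist {w : ℕ → Sig n} {r : ℕ → GuessState n}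
    (hr : ∀ m, r (m + 1) ∈ (guessNBW n).δ (r m) (w m)) {m₀ : ℕ} (h₀ : r m₀ = .inr 0) (k : ℕ) :
    ∃ a l, m₀ ≤ a ∧ a + l = m₀ + k ∧ seg w a l ∈ guessHist (r (m₀ + k)) := by
  induction k with
  | zero => exact ⟨m₀, 0, le_rfl, rfl, by simp [h₀, guessHist]⟩
  | succ k ih =>
    obtain ⟨a, l, ha, hal, hhist⟩ := ih
    obtain ⟨i, hi⟩ := hr (m₀ + k)
    rw [← Nat.add_assoc, ← hi]
    rcases guessHist_guessStep i (r (m₀ + k)) (w (m₀ + k)) with h | h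
    · exact ⟨m₀ + k, 1, by omega, rfl, by simpa [seg] using h⟩
    · exact ⟨a, l + 1, ha, by omega, by rw [seg_succ, hal]; exact h _ hhist⟩

lemma exists_good_infix_of_acc {w : ℕ → Sig n} {r : ℕ → GuessState n}
    (hr : ∀ m, r (m + 1) ∈ (guessNBW n).δ (r m) (w m)) {m₀ m : ℕ} (h₀ : r m₀ = .inr 0)
    (hm : m₀ ≤ m) (hacc : (r m, w m, r (m + 1)) ∈ (guessNBW n).α) :
    ∃ a len, m₀ ≤ a ∧ seg w a len ∈ GoodWord n := by
  obtain ⟨k, rfl⟩ := Nat.exists_eq_add_of_le hm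
  obtain ⟨a, l, ha, hal, hhist⟩ := exists_seg_mem_guessHist hr h₀ k
  obtain ⟨i, he⟩ := hacc
  simp only [Prod.mk.injEq] at he
  rw [he.1] at hhist
  obtain ⟨x, hx, hu⟩ := hhist
  refine ⟨a, l + 1, ha, x, i, List.ne_nil_of_mem hx, hx, ?_⟩
  rw [seg_succ, hu, hal, he.2.1]
  simp [openBlock]

theorem langFrom_guessNBW_subset (q : GuessState n) : (guessNBW n).LangFrom q ⊆ Ln n := by
  rintro w ⟨r, -, hr, hacc⟩
  rw [frequently_atTop] at hacc
  intro N
  obtain ⟨m₁, hm₁, i, he⟩ := hacc N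
  obtain ⟨m₂, hm₂, hacc₂⟩ := hacc (m₁ + 1)
  obtain ⟨a, len, ha, hgood⟩ :=
    exists_good_infix_of_acc hr (congrArg (·.2.2) he) hm₂ hacc₂
  exact ⟨a, len, by omega, hgood⟩

lemma guessRun_acc {w : ℕ → Sig n} {g : ℕ → Fin n} {r : ℕ → GuessState n}
    (hr : ∀ m, r (m + 1) = guessStep (g m) (r m) (w m)) {a : ℕ} {x : List (Fin n)} {i : Fin n}
    (hx : i ∈ x) (hseg : seg w a (x.length + 3) = openBlock x ++ [＃, .inl i]) (hg : g a = i) :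
    (r (a + 1 + (x.length + 1)), w (a + 1 + (x.length + 1)), r (a + 1 + (x.length + 1) + 1)) ∈
      (guessNBW n).α := by
  have hsplit := seg_add w a (1 + (x.length + 1)) 1
  rw [show 1 + (x.length + 1) + 1 = x.length + 3 by omega, hseg, seg_add w a 1, ← Nat.add_assoc,
    show openBlock x ++ [＃, .inl i] = [＄] ++ (x.map Sum.inl ++ [＃]) ++ [.inl i] by
      simp [openBlock]] at hsplit
  obtain ⟨hsplit, hlast⟩ := List.append_inj' hsplit (by simp)
  obtain ⟨hfirst, hbody⟩ := List.append_inj hsplit (by simp)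
  simp only [seg, List.ofFn_succ, List.ofFn_zero, Fin.val_zero, Nat.add_zero,
    List.cons.injEq, and_true] at hfirst hlast
  have hstart : r (a + 1) = .inl (i, 0) := by rw [hr, ← hfirst, hg]; rfl
  have hend : r (a + 1 + (x.length + 1)) = .inl (i, 2) := by
    rw [guessRun_eq_foldl hr i _ (by simp [← hbody]), ← hbody, hstart, List.foldl_append,
      foldl_guessStep_unseen, if_pos hx]
    rfl
  exact ⟨i, by rw [hr, hend, ← hlast]; rfl⟩

theorem Ln_subset_langFrom_guessNBW (q : GuessState n) : Ln n ⊆ (guessNBW n).LangFrom q := by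
  intro w hw
  let GoodAt (a : ℕ) (i : Fin n) : Prop :=
    ∃ x, i ∈ x ∧ seg w a (x.length + 3) = openBlock x ++ [＃, .inl i]
  let g (a : ℕ) : Fin n := Classical.epsilon (GoodAt a)
  let r (m : ℕ) : GuessState n := Nat.rec q (fun m s => guessStep (g m) s (w m)) m
  refine ⟨r, rfl, fun m => ⟨g m, rfl⟩, frequently_atTop.2 fun N => ?_⟩
  obtain ⟨a, len, ha, x, i, -, hx, hseg⟩ := hw N
  have hlen : len = x.length + 3 := by simpa using congrArg List.length hseg
  obtain ⟨x', hx', hseg'⟩ : GoodAt a (g a) := Classical.epsilon_spec ⟨i, x, hx, hlen ▸ hseg⟩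
  exact ⟨_, by omega, guessRun_acc (fun _ => rfl) hx' hseg' rfl⟩

theorem langFrom_guessNBW (q : GuessState n) : (guessNBW n).LangFrom q = Ln n :=
  (langFrom_guessNBW_subset q).antisymm (Ln_subset_langFrom_guessNBW q)

end Guessing

/-- `L_n` is recognized by an SD-tNBW with `3n+3` states, but every tDBW for
`L_n` needs at least `2^n` states. -/
theorem sd_tnbw_succinct (n : ℕ) (hn : 1 ≤ n) :
    (∃ (Q : Type) (_ : Fintype Q) (M : tNBW (Sig n) Q),
        Fintype.card Q = 3 * n + 3 ∧ M.SD ∧ M.Lang = Ln n) ∧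
    (∀ (Q : Type) (_ : Fintype Q) (D : tDBW (Sig n) Q) (α : Set (Q × Sig n × Q)),
        D.Lang α = Ln n → 2 ^ n ≤ Fintype.card Q) := by
  have : NeZero n := ⟨by omega⟩
  refine ⟨⟨GuessState n, inferInstance, guessNBW n, ?_, tNBW.sd_of_langFrom_eq langFrom_guessNBW,
    tNBW.lang_eq_of_langFrom_eq langFrom_guessNBW⟩, fun Q _ D α hL => two_pow_le_card hL⟩
  simp only [Fintype.card_sum, Fintype.card_prod, Fintype.card_fin]
  ring
end

section
/- For every n ≥ 1, there is a language L_n over an alphabet of size n+2 recognized by a semantically deterministic transition-based nondeterministic co-Büchi automaton with 3n+3 states, such that every history-deterministic transition-based nondeterministic co-Büchi automaton recognizing L_n has at least 2^n states. -/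
open Filter

variable {A Q : Type}

/-- A transition-based nondeterministic co-Büchi automaton (tNCW). -/
structure tNCW (A Q : Type) where
  init : Set Q
  δ : Q → A → Set Q
  α : Set (Q × A × Q)
  init_nonempty : init.Nonempty
  δ_nonempty : ∀ q a, (δ q a).Nonempty

namespace tNCW

/-- `L(A^q)`: words having a run from `q` traversing `α`-transitions only
finitely often. -/
def LangFrom (M : tNCW A Q) (q : Q) : Set (ℕ → A) :=
  {w | ∃ r : ℕ → Q, r 0 = q ∧ (∀ i, r (i + 1) ∈ M.δ (r i) (w i)) ∧
    ∀ᶠ i in atTop, (r i, w i, r (i + 1)) ∉ M.α}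

def Lang (M : tNCW A Q) : Set (ℕ → A) :=
  {w | ∃ q ∈ M.init, w ∈ M.LangFrom q}

/-- Semantic determinism. -/
def SD (M : tNCW A Q) : Prop :=
  (∀ q₁ ∈ M.init, ∀ q₂ ∈ M.init, M.LangFrom q₁ = M.LangFrom q₂) ∧
  ∀ q a, ∀ q₁ ∈ M.δ q a, ∀ q₂ ∈ M.δ q a, M.LangFrom q₁ = M.LangFrom q₂

end tNCW

/-- `w` has a suffix in `($·R)^ω`: there is an infinite increasing sequence
`f` of `$`-positions (`$` is `none`) such that, between any two consecutive
ones, the letters spell a word of `R`. -/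
def HasDollarRSuffix (R : Set (List A)) (w : ℕ → Option A) : Prop :=
  ∃ f : ℕ → ℕ, StrictMono f ∧ ∀ k, w (f k) = none ∧
    ∃ x ∈ R, (List.ofFn fun t : Fin (f (k + 1) - (f k + 1)) => w (f k + 1 + t)) = x.map some

/-- `⋈_$(R)`: the words over `Σ ∪ {$}` that either contain finitely many
`$`'s or have a suffix in `($·R)^ω`. -/
def Bowtie (R : Set (List A)) : Set (ℕ → Option A) :=
  {w | (∀ N, ∃ i, N ≤ i ∧ w i = none) → HasDollarRSuffix R w}

/-- The prefix of length `k` of an infinite word. -/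
def wordPrefix (w : ℕ → A) (k : ℕ) : List A := List.ofFn fun t : Fin k => w t

/-- A tNCW is history deterministic if some strategy `f : Σ* → Q`, consistent
with the transition function, induces an accepting run (traversing `α` only
finitely often) on every word of the language. -/
def tNCW.HD (M : tNCW A Q) : Prop :=
  ∃ f : List A → Q, f [] ∈ M.init ∧ (∀ u a, f (u ++ [a]) ∈ M.δ (f u) a) ∧
    ∀ w ∈ M.Lang,
      ∀ᶠ i in atTop, (f (wordPrefix w i), w i, f (wordPrefix w (i + 1))) ∉ M.α

/-- The alphabet `Σ_n = [n] ∪ {#}` of size `n+1`; `Sum.inr ()` is `#`.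
Together with `$` (`none` in `Option (SigC n)`), the full alphabet has size
`n+2`. -/
abbrev SigC (n : ℕ) := Fin n ⊕ Unit

/-- `R_n = {x·#·i : x ∈ [n]⁺ and i appears in x}`. -/
def RnC (n : ℕ) : Set (List (SigC n)) :=
  {z | ∃ (x : List (Fin n)) (i : Fin n), x ≠ [] ∧ i ∈ x ∧
    z = x.map Sum.inl ++ [Sum.inr (), Sum.inl i]}

/-- `L_n = ⋈_$(R_n)`. -/
def LnC (n : ℕ) : Set (ℕ → Option (SigC n)) := Bowtie (RnC n)

/-!
Upper bound: every transition is available and α is the complement of a small set of "safe"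
steps, which guess the letter `i` that a block `x # i` must repeat; hence every state recognizes
`L_n` and the automaton is trivially semantically deterministic.

Lower bound: fix an HD strategy `f`. There is a prefix `u₀` after which `f` avoids α on every
continuation in `($ R_n)*`, since otherwise an adversary builds a word of `L_n` on which `f`
visits α infinitely often. For nonempty `S ⊆ [n]`, reading the legs `k $ x_S #` (`k ∈ S`) from
the states reached after `u₀ ($ R_n)* $ x_S #` avoids α, so a bottom strongly connected component
of this leg graph gives a state `p_S` with α-free loops starting with each `k $` and ending with
`$ x_S #`. If `p_S = p_S'` with `k ∈ S' \ S`, gluing two such loops gives an α-free cycle through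
the gap `$ x_S # k $`, and the lasso around it is accepted although it is not in `L_n`. A state
in the middle of a loop of `p_[n]` plays the role of `p_∅`.
-/

/-- `HasDollarRSuffix` is phrased with this very list, so the two unfold to each other. -/
def wordSegment (w : ℕ → A) (i j : ℕ) : List A := List.ofFn fun t : Fin (j - i) => w (i + t)

section WordSegment

variable {w : ℕ → A} {i j : ℕ}

@[simp]
theorem length_wordSegment : (wordSegment w i j).length = j - i := List.length_ofFn

@[simp]
theorem getElem_wordSegment {t : ℕ} (h : t < (wordSegment w i j).length) :
    (wordSegment w i j)[t] = w (i + t) := List.getElem_ofFn ..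

theorem wordSegment_eq_nil (h : j ≤ i) : wordSegment w i j = [] :=
  List.eq_nil_of_length_eq_zero (by simp; omega)

theorem drop_wordSegment (m : ℕ) : (wordSegment w i j).drop m = wordSegment w (i + m) j :=
  List.ext_getElem (by simp; omega) fun t _ _ => by simp [Nat.add_assoc]

theorem take_wordSegment {m : ℕ} (h : i + m ≤ j) :
    (wordSegment w i j).take m = wordSegment w i (i + m) :=
  List.ext_getElem (by simp; omega) fun t _ _ => by simp

theorem wordSegment_cons (h : i < j) : wordSegment w i j = w i :: wordSegment w (i + 1) j := by
  refine List.ext_getElem (by simp; omega) fun t _ _ => ?_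
  cases t <;> simp [Nat.add_assoc, Nat.add_comm 1]

theorem wordSegment_succ_right (h : i ≤ j) :
    wordSegment w i (j + 1) = wordSegment w i j ++ [w j] := by
  rw [← List.take_append_drop (j - i) (wordSegment w i (j + 1)), take_wordSegment (by omega),
    drop_wordSegment, Nat.add_sub_cancel' h, wordSegment_cons (i := j) (by omega),
    wordSegment_eq_nil le_rfl]

theorem apply_mem_wordSegment {m : ℕ} (h₁ : i ≤ m) (h₂ : m < j) :
    w m ∈ wordSegment w i j := by
  obtain ⟨t, rfl⟩ := Nat.exists_eq_add_of_le h₁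
  exact List.mem_of_getElem (getElem_wordSegment (by simp; omega))

theorem wordPrefix_eq_wordSegment (w : ℕ → A) (k : ℕ) : wordPrefix w k = wordSegment w 0 k :=
  List.ext_getElem (by simp [wordPrefix]) fun t _ _ => by simp [wordPrefix]

end WordSegment

theorem wordSegment_get_eq_take_drop (s : Stream' A) (i j : ℕ) :
    wordSegment s.get i j = (s.drop i).take (j - i) :=
  List.ext_getElem (by simp [Stream'.length_take]) fun t _ _ => by
    simp [Stream'.get_drop]

theorem Stream'.drop_mul_length_cycle (L : List A) (hL : L ≠ []) (k : ℕ) :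
    (Stream'.cycle L hL).drop (k * L.length) = Stream'.cycle L hL := by
  induction k with
  | zero => simp
  | succ k ih =>
    rw [Nat.succ_mul, ← Stream'.drop_drop, ih]
    nth_rw 1 [Stream'.cycle_eq L hL]
    exact Stream'.drop_append_stream _ _

theorem exists_lasso (u L : List A) (hL : L ≠ []) :
    ∃ w : ℕ → A, wordSegment w 0 u.length = u ∧
      ∀ k, wordSegment w (u.length + k * L.length) (u.length + (k + 1) * L.length) = L := by
  refine ⟨(u ++ₛ Stream'.cycle L hL).get, ?_, fun k => ?_⟩
  · rw [wordSegment_get_eq_take_drop, Nat.sub_zero, Stream'.drop_zero,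
      Stream'.take_append_of_le_length (h := le_rfl), List.take_length]
  · have hlen : u.length + (k + 1) * L.length - (u.length + k * L.length) = L.length := by
      rw [Nat.succ_mul]; omega
    rw [wordSegment_get_eq_take_drop, ← Stream'.drop_drop, Stream'.drop_append_stream,
      Stream'.drop_mul_length_cycle, Stream'.cycle_eq L hL, hlen,
      Stream'.take_append_of_le_length (h := le_rfl), List.take_length]

theorem wordPrefix_succ (w : ℕ → A) (k : ℕ) :
    wordPrefix w (k + 1) = wordPrefix w k ++ [w k] := by
  simp only [wordPrefix, List.ofFn_succ', List.concat_eq_append]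
  rfl

theorem wordPrefix_length_eq_of_prefix {w : ℕ → A} {l : List A} {m : ℕ}
    (h : l <+: wordPrefix w m) : wordPrefix w l.length = l := by
  have hm : l.length ≤ m := by simpa [wordPrefix] using h.length_le
  rw [List.prefix_iff_eq_take.1 h, wordPrefix_eq_wordSegment, wordPrefix_eq_wordSegment,
    take_wordSegment (by simpa using hm)]
  simp

theorem exists_wordPrefix_eq_of_chain {α : Type} [Inhabited α] {B : ℕ → List α}
    (hB : ∀ k, B k <+: B (k + 1)) (hlen : ∀ k, k ≤ (B k).length) :
    ∃ w : ℕ → α, ∀ k, wordPrefix w (B k).length = B k := by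
  have hle : ∀ j k, j ≤ k → B j <+: B k := fun j k hjk => by
    induction k, hjk using Nat.le_induction with
    | base => exact List.prefix_refl _
    | succ k _ ih => exact ih.trans (hB k)
  refine ⟨fun i => (B (i + 1)).getD i default, fun k =>
    List.ext_getElem (by simp [wordPrefix]) fun t _ ht => ?_⟩
  have h₁ : t < (B (t + 1)).length := by have := hlen (t + 1); omega
  simp only [wordPrefix, List.getElem_ofFn, List.getD_eq_getElem _ _ h₁]
  rw [(hle _ _ (le_max_right k (t + 1))).getElem h₁, (hle _ _ (le_max_left k (t + 1))).getElem ht]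

theorem exists_forall_reflTransGen_imp_reflTransGen {α : Type*} [Finite α]
    (r : α → α → Prop) {X : Set α} (hX : X.Nonempty) (hr : ∀ x y, r x y → y ∈ X) :
    ∃ p ∈ X, ∀ y, Relation.ReflTransGen r p y → Relation.ReflTransGen r y p := by
  obtain ⟨p, hpX, hmin⟩ :=
    X.toFinite.exists_minimalFor (fun x => {y | Relation.ReflTransGen r x y}) X hX
  refine ⟨p, hpX, fun y hy => ?_⟩
  have hyX : y ∈ X := by
    rcases hy.cases_tail with rfl | ⟨z, -, hzy⟩
    exacts [hpX, hr z y hzy]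
  exact hmin hyX (fun z hz => hy.trans hz) Relation.ReflTransGen.refl

theorem List.suffix_append_flatten {α : Type*} {s ℓ : List α} {ls : List (List α)}
    (hℓ : s <:+ ℓ) (hls : ∀ l ∈ ls, s <:+ l) : s <:+ ℓ ++ ls.flatten := by
  induction ls generalizing ℓ with
  | nil => simpa using hℓ
  | cons l ls ih =>
    simpa using ih ((hls l (by simp)).trans (List.suffix_append ℓ l)) fun l' hl' =>
      hls l' (by simp [hl'])

namespace tNCW

variable (M : tNCW A Q)

inductive Path (T : Set (Q × A × Q)) : Q → List A → Q → Prop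
  | nil (q : Q) : Path T q [] q
  | cons {q q' q'' : Q} {a : A} {l : List A} :
      q' ∈ M.δ q a → (q, a, q') ∈ T → Path T q' l q'' → Path T q (a :: l) q''

abbrev SafePath : Q → List A → Q → Prop := M.Path M.αᶜ

def Reachable (p : Q) : Prop := ∃ q₀ ∈ M.init, ∃ u, M.Path Set.univ q₀ u p

def StrategySafe (f : List A → Q) (u v : List A) : Prop :=
  ∀ v' a, v' ++ [a] <+: v → (f (u ++ v'), a, f (u ++ v' ++ [a])) ∉ M.α

variable {M} {T T' : Set (Q × A × Q)} {q q' q'' : Q} {l l₁ l₂ : List A}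

theorem Path.append (h₁ : M.Path T q l₁ q') (h₂ : M.Path T q' l₂ q'') :
    M.Path T q (l₁ ++ l₂) q'' := by
  induction h₁ with
  | nil => exact h₂
  | cons hδ hT _ ih => exact .cons hδ hT (ih h₂)

theorem Path.exists_of_append (h : M.Path T q (l₁ ++ l₂) q'') :
    ∃ q', M.Path T q l₁ q' ∧ M.Path T q' l₂ q'' := by
  induction l₁ generalizing q with
  | nil => exact ⟨q, .nil q, h⟩
  | cons a l₁ ih =>
    obtain _ | ⟨hδ, hT, h⟩ := h
    obtain ⟨q', h₁, h₂⟩ := ih h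
    exact ⟨q', .cons hδ hT h₁, h₂⟩

theorem Path.mono (hTT' : T ⊆ T') (h : M.Path T q l q') : M.Path T' q l q' := by
  induction h with
  | nil => exact .nil _
  | cons hδ hT _ ih => exact .cons hδ (hTT' hT) ih

theorem Path.eq_of_nil (h : M.Path T q [] q') : q = q' := by
  cases h; rfl

theorem Reachable.path {p p' : Q} (hp : M.Reachable p) (h : M.Path T p l p') :
    M.Reachable p' := by
  obtain ⟨q₀, hq₀, u, hu⟩ := hp
  exact ⟨q₀, hq₀, u ++ l, hu.append (h.mono (Set.subset_univ T))⟩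

variable {f : List A → Q}

theorem path_of_strategy (hf : ∀ u a, f (u ++ [a]) ∈ M.δ (f u) a) {u v : List A}
    (h : ∀ v' a, v' ++ [a] <+: v → (f (u ++ v'), a, f (u ++ v' ++ [a])) ∈ T) :
    M.Path T (f u) v (f (u ++ v)) := by
  induction v generalizing u with
  | nil => simpa using Path.nil (f u)
  | cons a v ih =>
    refine .cons (hf u a) (by simpa using h [] a (by simp)) ?_
    simpa using ih (u := u ++ [a]) fun v' b hv' =>
      by simpa using h (a :: v') b (by simpa using hv')

theorem reachable_of_strategy (hf : ∀ u a, f (u ++ [a]) ∈ M.δ (f u) a)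
    (hf₀ : f [] ∈ M.init) (u : List A) : M.Reachable (f u) :=
  ⟨f [], hf₀, u, by simpa using path_of_strategy hf (u := []) (T := Set.univ) (by simp)⟩

theorem StrategySafe.safePath (hf : ∀ u a, f (u ++ [a]) ∈ M.δ (f u) a) {u v : List A}
    (h : M.StrategySafe f u v) : M.SafePath (f u) v (f (u ++ v)) :=
  path_of_strategy hf h

theorem StrategySafe.of_prefix {u v v₁ : List A} (h : M.StrategySafe f u v)
    (hv : v₁ <+: v) : M.StrategySafe f u v₁ :=
  fun v' a hv' => h v' a (hv'.trans hv)

theorem StrategySafe.of_append {u v₁ v₂ : List A}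
    (h : M.StrategySafe f u (v₁ ++ v₂)) : M.StrategySafe f (u ++ v₁) v₂ :=
  fun v' a hv' => by
  simpa using h (v₁ ++ v') a (by simpa using (List.prefix_append_right_inj v₁).2 hv')

variable {w : ℕ → A}

theorem mem_langFrom_of_invariant (I : ℕ → Q → Prop) (N : ℕ) (h₀ : I 0 q)
    (hI : ∀ i p, I i p →
      ∃ p' ∈ M.δ p (w i), (N ≤ i → (p, w i, p') ∉ M.α) ∧ I (i + 1) p') :
    w ∈ M.LangFrom q := by
  choose F hFδ hFα hFI using hI
  let r : (i : ℕ) → {p // I i p} := fun i =>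
    Nat.rec ⟨q, h₀⟩ (fun i p => ⟨F i p.1 p.2, hFI i p.1 p.2⟩) i
  exact ⟨fun i => (r i).1, rfl, fun i => hFδ i _ _,
    eventually_atTop.2 ⟨N, fun i hi => hFα i _ _ hi⟩⟩

theorem Path.exists_step_of_wordSegment {i j : ℕ}
    (h : M.Path T q (wordSegment w i j) q') (hij : i < j) :
    ∃ p ∈ M.δ q (w i), (q, w i, p) ∈ T ∧
      (i + 1 < j ∧ M.Path T p (wordSegment w (i + 1) j) q' ∨ i + 1 = j ∧ p = q') := by
  rw [wordSegment_cons hij] at h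
  obtain _ | ⟨hδ, hT, h⟩ := h
  refine ⟨_, hδ, hT, ?_⟩
  rcases Nat.lt_or_ge (i + 1) j with hlt | hge
  · exact .inl ⟨hlt, h⟩
  · rw [wordSegment_eq_nil hge] at h
    exact .inr ⟨by omega, h.eq_of_nil⟩

theorem mem_langFrom_of_blocks {p : ℕ → ℕ} (hp : StrictMono p) {qs : ℕ → Q}
    (h₀ : M.Path Set.univ q (wordSegment w 0 (p 0)) (qs 0))
    (h : ∀ k, M.SafePath (qs k) (wordSegment w (p k) (p (k + 1))) (qs (k + 1))) :
    w ∈ M.LangFrom q := by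
  let I : ℕ → Q → Prop := fun i r =>
    (i < p 0 ∧ M.Path Set.univ r (wordSegment w i (p 0)) (qs 0)) ∨
      ∃ k, p k ≤ i ∧ i < p (k + 1) ∧ M.SafePath r (wordSegment w i (p (k + 1))) (qs (k + 1))
  have hstart : ∀ k, I (p k) (qs k) := fun k => .inr ⟨k, le_rfl, hp (Nat.lt_succ_self k), h k⟩
  refine mem_langFrom_of_invariant I (p 0) ?_ ?_
  · rcases Nat.eq_zero_or_pos (p 0) with h0 | h0
    · rw [h0, wordSegment_eq_nil le_rfl] at h₀
      simpa [h₀.eq_of_nil, h0] using hstart 0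
    · exact .inl ⟨h0, h₀⟩
  · rintro i r (⟨hi, hr⟩ | ⟨k, hki, hik, hr⟩)
    · obtain ⟨r', hδ, -, hnext⟩ := hr.exists_step_of_wordSegment hi
      refine ⟨r', hδ, fun h => absurd h (by omega), ?_⟩
      rcases hnext with ⟨hlt, hr'⟩ | ⟨heq, rfl⟩
      · exact .inl ⟨hlt, hr'⟩
      · simpa [heq] using hstart 0
    · obtain ⟨r', hδ, hα, hnext⟩ := hr.exists_step_of_wordSegment hik
      refine ⟨r', hδ, fun _ => hα, ?_⟩
      rcases hnext with ⟨hlt, hr'⟩ | ⟨heq, rfl⟩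
      · exact .inr ⟨k, by omega, hlt, hr'⟩
      · simpa [heq] using hstart (k + 1)

theorem lasso_mem_langFrom {p : Q} {u L : List A} (hu : M.Path Set.univ q u p)
    (hL : M.SafePath p L p) (hne : L ≠ []) (hw₀ : wordSegment w 0 u.length = u)
    (hw : ∀ k, wordSegment w (u.length + k * L.length) (u.length + (k + 1) * L.length) = L) :
    w ∈ M.LangFrom q := by
  have hpos : 0 < L.length := List.length_pos_iff.2 hne
  refine mem_langFrom_of_blocks (p := fun k => u.length + k * L.length) (qs := fun _ => p)
    (fun k k' hk => by simpa using Nat.mul_lt_mul_of_pos_right hk hpos) (by simpa [hw₀]) ?_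
  intro k
  simpa [hw k] using hL

theorem path_wordSegment_of_run {r : ℕ → Q} {i j : ℕ} (hij : i ≤ j)
    (h : ∀ t, i ≤ t → t < j →
      r (t + 1) ∈ M.δ (r t) (w t) ∧ (r t, w t, r (t + 1)) ∈ T) :
    M.Path T (r i) (wordSegment w i j) (r j) := by
  obtain ⟨d, rfl⟩ := Nat.exists_eq_add_of_le hij
  induction d generalizing i with
  | zero => simpa [wordSegment_eq_nil] using Path.nil (M := M) (T := T) (r i)
  | succ d ih =>
    rw [wordSegment_cons (by omega), show i + (d + 1) = i + 1 + d by omega]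
    exact .cons (h i le_rfl (by omega)).1 (h i le_rfl (by omega)).2
      (ih (by omega) fun t ht₁ ht₂ => h t (by omega) (by omega))

theorem exists_safe_loops [Finite Q] (hf : ∀ u a, f (u ++ [a]) ∈ M.δ (f u) a)
    {C Λ : Set (List A)} (hC : C.Nonempty) (hCΛ : ∀ c ∈ C, ∀ ℓ ∈ Λ, c ++ ℓ ∈ C)
    (hsafe : ∀ c ∈ C, ∀ ℓ ∈ Λ, M.StrategySafe f c ℓ) :
    ∃ c ∈ C, ∀ ℓ ∈ Λ, ∃ ls : List (List A), (∀ l ∈ ls, l ∈ Λ) ∧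
      M.SafePath (f c) (ℓ ++ ls.flatten) (f c) := by
  let r : Q → Q → Prop := fun x y => ∃ c ∈ C, x = f c ∧ ∃ ℓ ∈ Λ, y = f (c ++ ℓ)
  have hpath : ∀ x y, Relation.ReflTransGen r x y →
      ∃ ls : List (List A), (∀ l ∈ ls, l ∈ Λ) ∧ M.SafePath x ls.flatten y := by
    intro x y h
    induction h using Relation.ReflTransGen.head_induction_on with
    | refl => exact ⟨[], by simp, .nil _⟩
    | head hxz _ ih =>
      obtain ⟨c, hc, rfl, ℓ, hℓ, rfl⟩ := hxz
      obtain ⟨ls, hls, hpath⟩ := ih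
      exact ⟨ℓ :: ls, by simpa [hℓ] using hls,
        ((hsafe c hc ℓ hℓ).safePath hf).append hpath⟩
  obtain ⟨_, ⟨c, hc, rfl⟩, hp⟩ := exists_forall_reflTransGen_imp_reflTransGen r (hC.image f)
    (by rintro x y ⟨c, hc, -, ℓ, hℓ, rfl⟩; exact ⟨_, hCΛ c hc ℓ hℓ, rfl⟩)
  refine ⟨c, hc, fun ℓ hℓ => ?_⟩
  obtain ⟨ls, hls, hback⟩ := hpath _ _ (hp _ (.single ⟨c, hc, rfl, ℓ, hℓ, rfl⟩))
  exact ⟨ls, hls, ((hsafe c hc ℓ hℓ).safePath hf).append hback⟩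

end tNCW

def joinDollar (cs : List (List A)) : List (Option A) :=
  (cs.map fun c => none :: c.map some).flatten

def IsDollarGap (w : ℕ → Option A) (a b : ℕ) : Prop :=
  a < b ∧ w a = none ∧ w b = none ∧ none ∉ wordSegment w (a + 1) b

theorem StrictMono.exists_le_lt_succ {g : ℕ → ℕ} (hg : StrictMono g) {x : ℕ}
    (hx : g 0 ≤ x) : ∃ k, g k ≤ x ∧ x < g (k + 1) := by
  refine ⟨Nat.findGreatest (fun k => g k ≤ x) x,
    Nat.findGreatest_spec (P := fun k => g k ≤ x) (Nat.zero_le x) hx, ?_⟩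
  by_contra! h
  by_cases hk : Nat.findGreatest (fun k => g k ≤ x) x + 1 ≤ x
  · exact Nat.findGreatest_is_greatest (Nat.lt_succ_self _) hk h
  · have := hg.le_apply (x := Nat.findGreatest (fun k => g k ≤ x) x + 1)
    omega

section Bowtie

variable {R : Set (List A)} {w : ℕ → Option A}

theorem HasDollarRSuffix.exists_forall_isDollarGap (h : HasDollarRSuffix R w) :
    ∃ N, ∀ a b, N ≤ a → IsDollarGap w a b →
      ∃ x ∈ R, wordSegment w (a + 1) b = x.map some := by
  obtain ⟨g, hg, hgw⟩ := h
  have hcover : ∀ y, g 0 ≤ y → w y = none → ∃ k, y = g k := by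
    intro y hy hwy
    obtain ⟨k, hky, hyk⟩ := hg.exists_le_lt_succ hy
    refine ⟨k, ((eq_or_lt_of_le hky).resolve_right fun hlt => ?_).symm⟩
    obtain ⟨x, -, hx : wordSegment w (g k + 1) (g (k + 1)) = x.map some⟩ := (hgw k).2
    have := apply_mem_wordSegment (w := w) hlt hyk
    simp [hx, hwy] at this
  refine ⟨g 0, fun a b ha ⟨hab, hwa, hwb, hgap⟩ => ?_⟩
  obtain ⟨k, rfl⟩ := hcover a ha hwa
  obtain ⟨k', rfl⟩ := hcover b (ha.trans hab.le) hwb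
  obtain rfl : k' = k + 1 := by
    have hk : k < k' := hg.lt_iff_lt.1 hab
    by_contra hne
    exact hgap ((hgw (k + 1)).1 ▸ apply_mem_wordSegment (hg (Nat.lt_succ_self k)) (hg (by omega)))
  exact (hgw k).2

theorem hasDollarRSuffix_of_forall_isDollarGap (hinf : ∀ N, ∃ i, N ≤ i ∧ w i = none)
    (N : ℕ) (h : ∀ a b, N ≤ a → IsDollarGap w a b →
      ∃ x ∈ R, wordSegment w (a + 1) b = x.map some) :
    HasDollarRSuffix R w := by
  let P : ℕ → Prop := fun i => N ≤ i ∧ w i = none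
  have hP : (Set.ofPred P).Infinite := Set.infinite_of_forall_exists_gt fun a => by
    obtain ⟨i, hi, hwi⟩ := hinf (max N (a + 1))
    exact ⟨i, ⟨le_of_max_le_left hi, hwi⟩, by omega⟩
  refine ⟨Nat.nth P, Nat.nth_strictMono hP, fun k => ⟨(Nat.nth_mem_of_infinite hP k).2, ?_⟩⟩
  refine h _ _ (Nat.nth_mem_of_infinite hP k).1
    ⟨Nat.nth_strictMono hP (Nat.lt_succ_self k), (Nat.nth_mem_of_infinite hP k).2,
      (Nat.nth_mem_of_infinite hP (k + 1)).2, fun hmem => ?_⟩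
  obtain ⟨t, ht, hm⟩ := List.getElem_of_mem hmem
  simp only [getElem_wordSegment, length_wordSegment] at ht hm
  have := Nat.le_nth_of_lt_nth_succ (p := P) (k := k) (a := Nat.nth P k + 1 + t) (by omega)
    ⟨(Nat.nth_mem_of_infinite hP k).1.trans (by omega), hm⟩
  omega

theorem isDollarGap_of_wordSegment_eq {i j : ℕ} {L₁ g L₂ : List (Option A)}
    (h : wordSegment w i j = L₁ ++ none :: g ++ none :: L₂) (hg : none ∉ g) :
    IsDollarGap w (i + L₁.length) (i + L₁.length + 1 + g.length) ∧
      wordSegment w (i + L₁.length + 1) (i + L₁.length + 1 + g.length) = g := by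
  have hj : i + L₁.length + 1 + g.length < j := by
    have := congrArg List.length h
    simp only [length_wordSegment, List.length_append, List.length_cons] at this
    omega
  have h₁ : wordSegment w (i + L₁.length) j = none :: (g ++ none :: L₂) := by
    rw [← drop_wordSegment, h]; simp
  rw [wordSegment_cons (by omega)] at h₁
  obtain ⟨hwa, h₂⟩ := List.cons_eq_cons.1 h₁
  have hgseg : wordSegment w (i + L₁.length + 1) (i + L₁.length + 1 + g.length) = g := by
    rw [← take_wordSegment (j := j) (by omega), h₂]; simp
  have h₃ := congrArg (List.drop g.length) h₂
  rw [drop_wordSegment, wordSegment_cons (by omega)] at h₃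
  simp only [List.drop_left', List.cons.injEq] at h₃
  exact ⟨⟨by omega, hwa, h₃.1, by rwa [hgseg]⟩, hgseg⟩

@[simp]
theorem joinDollar_append (cs cs' : List (List A)) :
    joinDollar (cs ++ cs') = joinDollar cs ++ joinDollar cs' := by
  simp [joinDollar]

theorem joinDollar_wordPrefix_succ (c : ℕ → List A) (j : ℕ) :
    joinDollar (wordPrefix c (j + 1)) = joinDollar (wordPrefix c j) ++ none :: (c j).map some := by
  simp [wordPrefix_succ, joinDollar]

theorem length_le_length_joinDollar (cs : List (List A)) :
    cs.length ≤ (joinDollar cs).length := by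
  induction cs with
  | nil => simp
  | cons c cs ih => simp [joinDollar] at ih ⊢; omega

theorem hasDollarRSuffix_of_wordPrefix_eq {c : ℕ → List A}
    (hc : ∀ j, c j ∈ R) {W : ℕ → Option A}
    (hW : ∀ j, wordPrefix W (joinDollar (wordPrefix c j)).length = joinDollar (wordPrefix c j)) :
    HasDollarRSuffix R W := by
  let g j := (joinDollar (wordPrefix c j)).length
  have hg : ∀ j, g (j + 1) = g j + 1 + (c j).length := fun j => by
    simp [g, joinDollar_wordPrefix_succ]; omega
  have hblock : ∀ j, wordSegment W (g j) (g (j + 1)) = none :: (c j).map some := fun j => by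
    rw [← Nat.zero_add (g j), ← drop_wordSegment, ← wordPrefix_eq_wordSegment, hW,
      joinDollar_wordPrefix_succ]
    simp [g]
  refine ⟨g, strictMono_nat_of_lt_succ fun j => by have := hg j; omega, fun j => ?_⟩
  have := hblock j
  rw [wordSegment_cons (by have := hg j; omega)] at this
  exact ⟨(List.cons_eq_cons.1 this).1, c j, hc j, (List.cons_eq_cons.1 this).2⟩

theorem exists_hasDollarRSuffix_of_chain {CS : ℕ → List (List A)}
    (hCS : ∀ k, CS k <+: CS (k + 1)) (hlen : ∀ k, k ≤ (CS k).length)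
    (hR : ∀ k, ∀ c ∈ CS k, c ∈ R) :
    ∃ W, HasDollarRSuffix R W ∧
      ∀ k, wordPrefix W (joinDollar (CS k)).length = joinDollar (CS k) := by
  obtain ⟨c, hc⟩ := exists_wordPrefix_eq_of_chain hCS hlen
  have hcR : ∀ j, c j ∈ R := fun j => by
    have hj : j < (wordPrefix c (CS (j + 1)).length).length := by
      simpa [wordPrefix] using hlen (j + 1)
    refine hR (j + 1) _ ?_
    rw [← hc (j + 1)]
    simpa [wordPrefix] using List.getElem_mem hj
  obtain ⟨W, hW⟩ := exists_wordPrefix_eq_of_chain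
    (fun j => ⟨_, (joinDollar_wordPrefix_succ c j).symm⟩)
    (fun j => (length_le_length_joinDollar _).trans_eq' (by simp [wordPrefix]))
  exact ⟨W, hasDollarRSuffix_of_wordPrefix_eq hcR hW, fun k => by rw [← hc k]; exact hW _⟩

end Bowtie

namespace tNCW

variable {R : Set (List A)} {M : tNCW (Option A) Q}

theorem exists_frequently_mem_α {f : List (Option A) → Q}
    (hbad : ∀ u, ∃ cs, (∀ c ∈ cs, c ∈ R) ∧ ¬M.StrategySafe f u (joinDollar cs)) :
    ∃ W, HasDollarRSuffix R W ∧
      ∀ N, ∃ i, N ≤ i ∧ (f (wordPrefix W i), W i, f (wordPrefix W (i + 1))) ∈ M.α := by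
  choose bad hbadR hbadα using hbad
  have hne : ∀ u, bad u ≠ [] := fun u h => hbadα u <| by
    simp [h, StrategySafe, joinDollar]
  let CS : ℕ → List (List A) := fun k => Nat.rec [] (fun _ cs => cs ++ bad (joinDollar cs)) k
  have hCS : ∀ k, CS (k + 1) = CS k ++ bad (joinDollar (CS k)) := fun _ => rfl
  have hCSR : ∀ k, ∀ c ∈ CS k, c ∈ R := by
    intro k
    induction k with
    | zero => simp [CS]
    | succ k ih => simpa [hCS, or_imp, forall_and] using ⟨ih, hbadR _⟩
  have hCSlen : ∀ k, k ≤ (CS k).length := by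
    intro k
    induction k with
    | zero => simp
    | succ k ih =>
      have := List.length_pos_iff.2 (hne (joinDollar (CS k)))
      simp only [hCS, List.length_append]
      omega
  obtain ⟨W, hWR, hW⟩ :=
    exists_hasDollarRSuffix_of_chain (fun k => ⟨_, (hCS k).symm⟩) hCSlen hCSR
  refine ⟨W, hWR, fun N => ?_⟩
  set u := joinDollar (CS N)
  obtain ⟨v, a, hva, hα⟩ : ∃ v a, v ++ [a] <+: joinDollar (bad u) ∧
      (f (u ++ v), a, f (u ++ v ++ [a])) ∈ M.α := by
    simpa [StrategySafe] using hbadα u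
  have hpre : u ++ v ++ [a] <+: wordPrefix W (joinDollar (CS (N + 1))).length := by
    rw [show wordPrefix W _ = _ from hW (N + 1), hCS, joinDollar_append, List.append_assoc]
    exact (List.prefix_append_right_inj u).2 hva
  have hw₁ : wordPrefix W ((u ++ v).length + 1) = u ++ v ++ [a] := by
    simpa [Nat.add_assoc] using wordPrefix_length_eq_of_prefix hpre
  have hw₀ : wordPrefix W (u ++ v).length = u ++ v :=
    wordPrefix_length_eq_of_prefix ((List.prefix_append _ _).trans hpre)
  have ha : W (u ++ v).length = a := by
    rw [wordPrefix_succ, hw₀] at hw₁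
    simpa using hw₁
  refine ⟨(u ++ v).length, (hCSlen N).trans ((length_le_length_joinDollar _).trans (by simp [u])),
    ?_⟩
  rwa [hw₀, ha, hw₁]

theorem exists_strategySafe_joinDollar (hL : M.Lang = Bowtie R) {f : List (Option A) → Q}
    (hacc : ∀ w ∈ M.Lang,
      ∀ᶠ i in atTop, (f (wordPrefix w i), w i, f (wordPrefix w (i + 1))) ∉ M.α) :
    ∃ u, ∀ cs, (∀ c ∈ cs, c ∈ R) → M.StrategySafe f u (joinDollar cs) := by
  by_contra! hbad
  obtain ⟨W, hWR, hα⟩ := exists_frequently_mem_α hbad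
  obtain ⟨N, hN⟩ := eventually_atTop.1 (hacc W (hL ▸ fun _ => hWR))
  obtain ⟨i, hi, hiα⟩ := hα N
  exact hN i hi hiα

theorem false_of_safe_loops (hL : M.Lang = Bowtie R) {p : Q} (hp : M.Reachable p)
    {P Z Y : List (Option A)} {a : A} (hP : none ∉ P)
    (hgap : ∀ x ∈ R, P ++ [some a] ≠ x.map some)
    (h₁ : M.SafePath p (Z ++ none :: P) p) (h₂ : M.SafePath p (some a :: none :: Y) p) :
    False := by
  obtain ⟨q₀, hq₀, u, hu⟩ := hp
  set L := Z ++ none :: (P ++ [some a]) ++ none :: Y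
  have hloop : M.SafePath p L p := by simpa [L] using h₁.append h₂
  have hLpos : 0 < L.length := by simp [L]
  obtain ⟨w, hw₀, hw⟩ := exists_lasso u L (List.length_pos_iff.1 hLpos)
  have hgaps := fun k => isDollarGap_of_wordSegment_eq (hw k) (by simpa using hP)
  have hpos : ∀ k, k ≤ u.length + k * L.length + Z.length := fun k => by
    have := Nat.le_mul_of_pos_right k hLpos
    omega
  have hwL : w ∈ Bowtie R :=
    hL ▸ ⟨q₀, hq₀, lasso_mem_langFrom hu hloop (by simp [L]) hw₀ hw⟩
  obtain ⟨N, hN⟩ := (hwL fun k => ⟨_, hpos k, (hgaps k).1.2.1⟩).exists_forall_isDollarGap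
  obtain ⟨x, hx, hxw⟩ := hN _ _ (hpos N) (hgaps N).1
  exact hgap x hx ((hgaps N).2.symm.trans hxw)

end tNCW

namespace Ln

variable {n : ℕ}

/-- `x_S #`. -/
noncomputable def prompt (S : Finset (Fin n)) : List (Option (SigC n)) :=
  (S.toList.map Sum.inl ++ [Sum.inr ()]).map some

noncomputable def core (S : Finset (Fin n)) (k : Fin n) : List (SigC n) :=
  S.toList.map Sum.inl ++ [Sum.inr (), Sum.inl k]

theorem core_mem_RnC {S : Finset (Fin n)} {k : Fin n} (hk : k ∈ S) : core S k ∈ RnC n :=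
  ⟨S.toList, k, by simpa using Finset.ne_empty_of_mem hk, by simpa using hk, rfl⟩

theorem map_some_core (S : Finset (Fin n)) (k : Fin n) :
    (core S k).map some = prompt S ++ [some (Sum.inl k)] := by
  simp [core, prompt]

theorem none_not_mem_of_subset_prompt {S : Finset (Fin n)} {P : List (Option (SigC n))}
    (hP : P ⊆ prompt S) : none ∉ P :=
  fun h => by simpa [prompt] using hP h

theorem append_ne_map_some_of_subset_prompt {S : Finset (Fin n)} {P : List (Option (SigC n))}
    (hP : P ⊆ prompt S) {k : Fin n} (hk : k ∉ S) :
    ∀ x ∈ RnC n, P ++ [some (Sum.inl k)] ≠ x.map some := by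
  rintro _ ⟨y, i, -, hi, rfl⟩ h
  have h' : P ++ [some (Sum.inl k)] =
      (y.map Sum.inl ++ [Sum.inr ()]).map some ++ [some (Sum.inl i)] := by simpa using h
  obtain ⟨rfl, hki⟩ := List.append_inj' h' rfl
  obtain rfl : k = i := by simpa using hki
  exact hk (by simpa [prompt] using @hP (some (Sum.inl k)) (by simp [hi]))

/-- The state `p_S`. Its loop may end with just a part `P` of `x_S #`, as for `S = ∅`,
where `P = []`. -/
def IsWitness (M : tNCW (Option (SigC n)) Q) (S : Finset (Fin n)) (p : Q) : Prop :=
  M.Reachable p ∧ (∀ k ∈ S, ∃ Y, M.SafePath p (some (Sum.inl k) :: none :: Y) p) ∧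
    ∃ P Z, P ⊆ prompt S ∧ M.SafePath p (Z ++ none :: P) p

variable {M : tNCW (Option (SigC n)) Q}

theorem IsWitness.subset (hL : M.Lang = LnC n) {S S' : Finset (Fin n)} {p : Q}
    (h : IsWitness M S p) (h' : IsWitness M S' p) : S' ⊆ S := by
  intro k hk
  by_contra hkS
  obtain ⟨Y, hY⟩ := h'.2.1 k hk
  obtain ⟨P, Z, hP, hZ⟩ := h.2.2
  exact tNCW.false_of_safe_loops hL h.1 (none_not_mem_of_subset_prompt hP)
    (append_ne_map_some_of_subset_prompt hP hkS) hZ hY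

theorem IsWitness.exists_isWitness_empty {S : Finset (Fin n)} {p : Q} (h : IsWitness M S p)
    {k : Fin n} (hk : k ∈ S) : ∃ m, IsWitness M ∅ m := by
  obtain ⟨Y, hY⟩ := h.2.1 k hk
  obtain ⟨m, hpm, hmp⟩ := hY.exists_of_append (l₁ := [some (Sum.inl k), none]) (l₂ := Y)
  exact ⟨m, h.1.path hpm, by simp, [], Y ++ [some (Sum.inl k)], by simp,
    by simpa using hmp.append hpm⟩

noncomputable def leg (S : Finset (Fin n)) (k : Fin n) : List (Option (SigC n)) :=
  some (Sum.inl k) :: none :: prompt S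

theorem joinDollar_append_leg (cs : List (List (SigC n))) (S : Finset (Fin n)) (k : Fin n) :
    joinDollar cs ++ none :: prompt S ++ leg S k =
      joinDollar (cs ++ [core S k]) ++ none :: prompt S := by
  simp [leg, joinDollar, map_some_core]

theorem strategySafe_leg {f : List (Option (SigC n)) → Q} {u₀ : List (Option (SigC n))}
    (hu₀ : ∀ cs, (∀ c ∈ cs, c ∈ RnC n) → M.StrategySafe f u₀ (joinDollar cs))
    {cs : List (List (SigC n))} (hcs : ∀ c ∈ cs, c ∈ RnC n) {S : Finset (Fin n)} {k : Fin n}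
    (hk : k ∈ S) : M.StrategySafe f (u₀ ++ (joinDollar cs ++ none :: prompt S)) (leg S k) := by
  have hsplit : joinDollar (cs ++ [core S k, core S k]) =
      (joinDollar cs ++ none :: prompt S) ++ (leg S k ++ [some (Sum.inl k)]) := by
    simp [leg, joinDollar, map_some_core]
  have := hu₀ (cs ++ [core S k, core S k])
    (by simpa [or_imp, forall_and] using ⟨hcs, core_mem_RnC hk⟩)
  rw [hsplit] at this
  exact this.of_append.of_prefix (List.prefix_append _ _)

theorem exists_isWitness [Finite Q] {f : List (Option (SigC n)) → Q}
    (hf : ∀ u a, f (u ++ [a]) ∈ M.δ (f u) a) (hf₀ : f [] ∈ M.init)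
    {u₀ : List (Option (SigC n))}
    (hu₀ : ∀ cs, (∀ c ∈ cs, c ∈ RnC n) → M.StrategySafe f u₀ (joinDollar cs))
    {S : Finset (Fin n)} (hS : S.Nonempty) : ∃ p, IsWitness M S p := by
  obtain ⟨_, ⟨cs, hcs, rfl⟩, hloops⟩ := tNCW.exists_safe_loops hf
    (C := {c | ∃ cs, (∀ x ∈ cs, x ∈ RnC n) ∧
      u₀ ++ (joinDollar cs ++ none :: prompt S) = c})
    (Λ := {ℓ | ∃ k ∈ S, leg S k = ℓ}) ⟨_, [], by simp, rfl⟩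
    (by
      rintro _ ⟨cs, hcs, rfl⟩ _ ⟨k, hk, rfl⟩
      refine ⟨cs ++ [core S k], ?_, by rw [List.append_assoc, joinDollar_append_leg]⟩
      simpa [or_imp, forall_and] using ⟨hcs, core_mem_RnC hk⟩)
    (by
      rintro _ ⟨cs, hcs, rfl⟩ _ ⟨k, hk, rfl⟩
      exact strategySafe_leg hu₀ hcs hk)
  obtain ⟨k₁, hk₁⟩ := hS
  obtain ⟨ls, hls, hloop⟩ := hloops _ ⟨k₁, hk₁, rfl⟩
  obtain ⟨Z, hZ⟩ : none :: prompt S <:+ leg S k₁ ++ ls.flatten := by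
    refine List.suffix_append_flatten (List.suffix_cons _ _) fun l hl => ?_
    obtain ⟨k, -, rfl⟩ := hls l hl
    exact List.suffix_cons _ _
  refine ⟨_, tNCW.reachable_of_strategy hf hf₀ _, fun k hk => ?_, prompt S, Z,
    List.Subset.refl _, hZ ▸ hloop⟩
  obtain ⟨ls, -, hloop⟩ := hloops _ ⟨k, hk, rfl⟩
  exact ⟨_, hloop⟩

theorem two_pow_le_card_of_hd [Fintype Q] (hn : 1 ≤ n) (M : tNCW (Option (SigC n)) Q)
    (hHD : M.HD) (hL : M.Lang = LnC n) : 2 ^ n ≤ Fintype.card Q := by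
  obtain ⟨f, hf₀, hf, hacc⟩ := hHD
  obtain ⟨u₀, hu₀⟩ := tNCW.exists_strategySafe_joinDollar hL hacc
  have hwit : ∀ S : Finset (Fin n), ∃ p, IsWitness M S p := by
    intro S
    rcases S.eq_empty_or_nonempty with rfl | hS
    · obtain ⟨p, hp⟩ :=
        exists_isWitness hf hf₀ hu₀ (Finset.univ_nonempty_iff.2 ⟨⟨0, hn⟩⟩)
      exact hp.exists_isWitness_empty (Finset.mem_univ ⟨0, hn⟩)
    · exact exists_isWitness hf hf₀ hu₀ hS
  choose G hG using hwit
  have hinj : Function.Injective G := fun S S' h =>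
    Finset.Subset.antisymm ((hG S').subset hL (h ▸ hG S)) ((hG S).subset hL (h ▸ hG S'))
  simpa using Fintype.card_le_of_injective G hinj

inductive State (n : ℕ) : Type
  | seek (i : Fin n)
  | seen (i : Fin n)
  | check (i : Fin n)
  | boundary
  | tail
  /-- Has no safe transition; it only brings the number of states to `3n + 3`. -/
  | spare

inductive Step : State n → Option (SigC n) → State n → Prop
  | seek_skip (i j : Fin n) : Step (.seek i) (some (.inl j)) (.seek i)
  | seek_hit (i : Fin n) : Step (.seek i) (some (.inl i)) (.seen i)
  | seen_letter (i j : Fin n) : Step (.seen i) (some (.inl j)) (.seen i)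
  | seen_hash (i : Fin n) : Step (.seen i) (some (.inr ())) (.check i)
  | check_hit (i : Fin n) : Step (.check i) (some (.inl i)) .boundary
  | boundary_dollar (i : Fin n) : Step .boundary none (.seek i)
  | tail_letter (a : SigC n) : Step .tail (some a) .tail

def stateEquiv (n : ℕ) : State n ≃ Fin 3 × Fin n ⊕ Fin 3 where
  toFun
    | .seek i => .inl (0, i)
    | .seen i => .inl (1, i)
    | .check i => .inl (2, i)
    | .boundary => .inr 0
    | .tail => .inr 1
    | .spare => .inr 2
  invFun
    | .inl (⟨0, _⟩, i) => .seek i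
    | .inl (⟨1, _⟩, i) => .seen i
    | .inl (⟨2, _⟩, i) => .check i
    | .inr ⟨0, _⟩ => .boundary
    | .inr ⟨1, _⟩ => .tail
    | .inr ⟨2, _⟩ => .spare
  left_inv q := by cases q <;> rfl
  right_inv x := by rcases x with ⟨k, i⟩ | k <;> fin_cases k <;> rfl

noncomputable instance : Fintype (State n) := Fintype.ofEquiv _ (stateEquiv n).symm

theorem card_state : Fintype.card (State n) = 3 * n + 3 := by
  rw [Fintype.card_congr (stateEquiv n)]
  simp [Nat.mul_comm]

def automaton (n : ℕ) : tNCW (Option (SigC n)) (State n) where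
  init := Set.univ
  δ _ _ := Set.univ
  α := {t | ¬ Step t.1 t.2.1 t.2.2}
  init_nonempty := ⟨.tail, trivial⟩
  δ_nonempty _ _ := ⟨.tail, trivial⟩

theorem safePath_cons {q q' q'' : State n} {a : Option (SigC n)} {l : List (Option (SigC n))}
    (h : Step q a q') (hl : (automaton n).SafePath q' l q'') :
    (automaton n).SafePath q (a :: l) q'' :=
  .cons trivial (by simpa [automaton] using h) hl

theorem SafePath.exists_step {q q'' : State n} {a : Option (SigC n)} {l : List (Option (SigC n))}
    (h : (automaton n).SafePath q (a :: l) q'') :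
    ∃ q', Step q a q' ∧ (automaton n).SafePath q' l q'' := by
  obtain _ | ⟨-, hα, hl⟩ := h
  exact ⟨_, by simpa [automaton] using hα, hl⟩

theorem Step.eq_boundary_of_none {q q' : State n} (h : Step q none q') :
    q = .boundary ∧ ∃ i, q' = .seek i := by
  cases h
  exact ⟨rfl, _, rfl⟩

theorem path_univ (q q' : State n) (a : Option (SigC n)) (l : List (Option (SigC n))) :
    (automaton n).Path Set.univ q (a :: l) q' := by
  induction l generalizing q a with
  | nil => exact .cons trivial trivial (.nil q')
  | cons b l ih => exact .cons (q' := q) trivial trivial (ih q b)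

theorem seen_safePath (i : Fin n) (y : List (Fin n)) :
    (automaton n).SafePath (.seen i) ((y.map Sum.inl ++ [Sum.inr (), Sum.inl i]).map some)
      .boundary := by
  induction y with
  | nil => exact safePath_cons (.seen_hash i) (safePath_cons (.check_hit i) (.nil _))
  | cons j y ih => exact safePath_cons (.seen_letter i j) ih

theorem seek_safePath {i : Fin n} {y : List (Fin n)} (hi : i ∈ y) :
    (automaton n).SafePath (.seek i) ((y.map Sum.inl ++ [Sum.inr (), Sum.inl i]).map some)
      .boundary := by
  induction y with
  | nil => simp at hi
  | cons j y ih =>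
    by_cases hj : j = i
    · subst hj
      exact safePath_cons (.seek_hit j) (seen_safePath j y)
    · exact safePath_cons (.seek_skip i j) (ih (by simpa [Ne.symm hj] using hi))

theorem eq_nil_of_safePath_boundary {l : List (Option (SigC n))}
    (h : (automaton n).SafePath .boundary l .boundary) (hl : none ∉ l) : l = [] := by
  cases l with
  | nil => rfl
  | cons a l =>
    obtain ⟨q', hstep, -⟩ := SafePath.exists_step h
    cases hstep
    simp at hl

theorem exists_eq_of_seen_safePath {i : Fin n} {l : List (Option (SigC n))}
    (h : (automaton n).SafePath (.seen i) l .boundary) (hl : none ∉ l) :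
    ∃ y : List (Fin n), l = (y.map Sum.inl ++ [Sum.inr (), Sum.inl i]).map some := by
  induction l with
  | nil => cases h
  | cons a l ih =>
    obtain ⟨q', hstep, h⟩ := SafePath.exists_step h
    cases hstep with
    | seen_letter _ j =>
      obtain ⟨y, rfl⟩ := ih h (by simp_all)
      exact ⟨j :: y, by simp⟩
    | seen_hash =>
      obtain _ | ⟨b, l⟩ := l
      · cases h
      obtain ⟨q'', hstep, h⟩ := SafePath.exists_step h
      cases hstep
      obtain rfl := eq_nil_of_safePath_boundary h (by simp_all)
      exact ⟨[], rfl⟩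

theorem exists_eq_of_seek_safePath {i : Fin n} {l : List (Option (SigC n))}
    (h : (automaton n).SafePath (.seek i) l .boundary) (hl : none ∉ l) :
    ∃ y : List (Fin n), i ∈ y ∧ l = (y.map Sum.inl ++ [Sum.inr (), Sum.inl i]).map some := by
  induction l with
  | nil => cases h
  | cons a l ih =>
    obtain ⟨q', hstep, h⟩ := SafePath.exists_step h
    cases hstep with
    | seek_skip _ j =>
      obtain ⟨y, hy, rfl⟩ := ih h (by simp_all)
      exact ⟨j :: y, by simp [hy], by simp⟩
    | seek_hit =>
      obtain ⟨y, rfl⟩ := exists_eq_of_seen_safePath h (by simp_all)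
      exact ⟨i :: y, by simp, by simp⟩

theorem langFrom_automaton_subset (q : State n) : (automaton n).LangFrom q ⊆ LnC n := by
  rintro w ⟨r, -, -, hr⟩ hinf
  obtain ⟨N, hN⟩ := eventually_atTop.1 hr
  have hstep : ∀ t, N ≤ t → Step (r t) (w t) (r (t + 1)) := fun t ht => by
    simpa [automaton] using hN t ht
  refine hasDollarRSuffix_of_forall_isDollarGap hinf N fun a b ha ⟨hab, hwa, hwb, hgap⟩ => ?_
  obtain ⟨-, i, hi⟩ := (hwa ▸ hstep a ha).eq_boundary_of_none
  obtain ⟨hb, -⟩ := (hwb ▸ hstep b (by omega)).eq_boundary_of_none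
  have hpath : (automaton n).SafePath (r (a + 1)) (wordSegment w (a + 1) b) (r b) :=
    tNCW.path_wordSegment_of_run hab fun t ht _ =>
      ⟨trivial, by simpa [automaton] using hstep t (by omega)⟩
  rw [hi, hb] at hpath
  obtain ⟨y, hy, hyw⟩ := exists_eq_of_seek_safePath hpath hgap
  exact ⟨_, ⟨y, i, List.ne_nil_of_mem hy, hy, rfl⟩, hyw⟩

theorem subset_langFrom_automaton (q : State n) : LnC n ⊆ (automaton n).LangFrom q := by
  intro w hw
  by_cases hinf : ∀ N, ∃ i, N ≤ i ∧ w i = none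
  · obtain ⟨g, hg, hgw⟩ := hw hinf
    choose hnone x hxR hx using hgw
    choose y i _ hiy hxy using hxR
    refine tNCW.mem_langFrom_of_blocks (p := fun k => g k + 1) (qs := fun k => .seek (i k))
      (fun _ _ h => Nat.add_lt_add_right (hg h) 1)
      (by rw [wordSegment_cons (Nat.succ_pos _)]; exact path_univ ..) fun k => ?_
    have hk : wordSegment w (g k + 1) (g (k + 1) + 1) = (x k).map some ++ [none] := by
      rw [wordSegment_succ_right (hg (Nat.lt_succ_self k)), ← hnone (k + 1)]
      exact congrArg (· ++ _) (hx k)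
    rw [hk, hxy k]
    exact (seek_safePath (hiy k)).append (safePath_cons (.boundary_dollar _) (.nil _))
  · push Not at hinf
    obtain ⟨N, hN⟩ := hinf
    refine ⟨fun t => if t = 0 then q else .tail, rfl, fun _ => trivial,
      eventually_atTop.2 ⟨N + 1, fun t ht => ?_⟩⟩
    obtain ⟨a, ha⟩ := Option.ne_none_iff_exists'.1 (hN t (by omega))
    simpa [automaton, ha, show t ≠ 0 by omega] using Step.tail_letter a

theorem langFrom_automaton (q : State n) : (automaton n).LangFrom q = LnC n :=
  (langFrom_automaton_subset q).antisymm (subset_langFrom_automaton q)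

theorem lang_automaton : (automaton n).Lang = LnC n :=
  Set.ext fun _ => ⟨fun ⟨q, _, hq⟩ => langFrom_automaton q ▸ hq,
    fun hw => ⟨.tail, trivial, (langFrom_automaton _).symm ▸ hw⟩⟩

theorem sd_automaton : (automaton n).SD :=
  ⟨fun _ _ _ _ => by rw [langFrom_automaton, langFrom_automaton],
    fun _ _ _ _ _ _ => by rw [langFrom_automaton, langFrom_automaton]⟩

end Ln

/-- `L_n` is recognized by an SD-tNCW with `3n+3` states, yet every
history-deterministic tNCW recognizing `L_n` has at least `2^n` states. -/
theorem sd_tncw_succinct (n : ℕ) (hn : 1 ≤ n) :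
    (∃ (Q : Type) (_ : Fintype Q) (M : tNCW (Option (SigC n)) Q),
        Fintype.card Q = 3 * n + 3 ∧ M.SD ∧ M.Lang = LnC n) ∧
    (∀ (Q : Type) (_ : Fintype Q) (M : tNCW (Option (SigC n)) Q),
        M.HD → M.Lang = LnC n → 2 ^ n ≤ Fintype.card Q) :=
  ⟨⟨Ln.State n, inferInstance, Ln.automaton n, Ln.card_state,
      Ln.sd_automaton, Ln.lang_automaton⟩,
    fun _ _ M hHD hL => Ln.two_pow_le_card_of_hd hn M hHD hL⟩
end

section
/- Let A be an SD nondeterministic weak automaton and let D be the deterministic weak automaton built from A (with states being deepest representatives of H-equivalence classes). If a run r' of D eventually stays in a rejecting SCC C of A from position j onward, then every run of A from the state s_j on the corresponding suffix of the word stays in C forever, hence is rejecting. -/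
open Filter

variable {A Q : Type}

/-- A (state-based) nondeterministic Büchi automaton with a single initial
state and a total transition function. -/
structure NBW (A Q : Type) where
  q0 : Q
  δ : Q → A → Set Q
  α : Set Q
  δ_nonempty : ∀ q a, (δ q a).Nonempty

namespace NBW

/-- `L(A^q)`: words having a run from `q` visiting `α` infinitely often. -/
def LangFrom (M : NBW A Q) (q : Q) : Set (ℕ → A) :=
  {w | ∃ r : ℕ → Q, r 0 = q ∧ (∀ i, r (i + 1) ∈ M.δ (r i) (w i)) ∧
    ∃ᶠ i in atTop, r i ∈ M.α}

def Lang (M : NBW A Q) : Set (ℕ → A) := M.LangFrom M.q0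

/-- `q'` is reachable from `q`. -/
def Reach (M : NBW A Q) (q q' : Q) : Prop :=
  ∃ u : List A, q' ∈ extSet M.δ {q} u

/-- The automaton is weak: every strongly connected component is contained in
`α` or disjoint from `α`, i.e. mutually reachable states agree on `α`. -/
def Weak (M : NBW A Q) : Prop :=
  ∀ q q', M.Reach q q' → M.Reach q' q → (q ∈ M.α ↔ q' ∈ M.α)

/-- Semantic determinism: all σ-successors of any state are
language-equivalent. -/
def SD (M : NBW A Q) : Prop :=
  ∀ q a, ∀ q₁ ∈ M.δ q a, ∀ q₂ ∈ M.δ q a, M.LangFrom q₁ = M.LangFrom q₂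

end NBW

/-- A (state-based) deterministic Büchi automaton. -/
structure DBW (A Q : Type) where
  q0 : Q
  δ : Q → A → Q
  α : Set Q

namespace DBW

def run (D : DBW A Q) (w : ℕ → A) : ℕ → Q
  | 0 => D.q0
  | i + 1 => D.δ (D.run w i) (w i)

def Lang (D : DBW A Q) : Set (ℕ → A) :=
  {w | ∃ᶠ i in atTop, D.run w i ∈ D.α}

def Reach (D : DBW A Q) (q q' : Q) : Prop :=
  ∃ u : List A, List.foldl D.δ q u = q'

/-- The deterministic automaton is weak. -/
def Weak (D : DBW A Q) : Prop :=
  ∀ q q', D.Reach q q' → D.Reach q' q → (q ∈ D.α ↔ q' ∈ D.α)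

end DBW

/-- Two states are δ-close if they are both reachable from some single state
via the same finite word. -/
def DeltaClose (δ : Q → A → Set Q) (s₁ s₂ : Q) : Prop :=
  ∃ (q : Q) (w : List A), s₁ ∈ extSet δ {q} w ∧ s₂ ∈ extSet δ {q} w

/-- `H`: the transitive closure of the δ-close relation. -/
def Hc (δ : Q → A → Set Q) : Q → Q → Prop :=
  Relation.TransGen (DeltaClose δ)

lemma extSet_append (δ : Q → A → Set Q) (S : Set Q) (u v : List A) :
    extSet δ S (u ++ v) = extSet δ (extSet δ S u) v := by
  induction u generalizing S with
  | nil => rfl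
  | cons a u ih => simp [extSet, ih]

lemma mem_extSet_step {δ : Q → A → Set Q} {S : Set Q} {u : List A} {q' q'' : Q} {a : A}
    (h1 : q' ∈ extSet δ S u) (h2 : q'' ∈ δ q' a) : q'' ∈ extSet δ S (u ++ [a]) := by
  rw [extSet_append]
  simp only [extSet, Set.mem_iUnion]
  exact ⟨q', h1, h2⟩

lemma reach_step (M : NBW A Q) {q q' q'' : Q} {a : A}
    (h : M.Reach q q') (h2 : q'' ∈ M.δ q' a) : M.Reach q q'' := by
  obtain ⟨u, hu⟩ := h
  exact ⟨u ++ [a], mem_extSet_step hu h2⟩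

lemma deltaClose_symm {δ : Q → A → Set Q} {s t : Q} (h : DeltaClose δ s t) :
    DeltaClose δ t s := by
  obtain ⟨q, u, h1, h2⟩ := h; exact ⟨q, u, h2, h1⟩

lemma hc_symm {δ : Q → A → Set Q} {s t : Q} (h : Hc δ s t) : Hc δ t s := by
  induction h with
  | single h => exact Relation.TransGen.single (deltaClose_symm h)
  | tail _ h ih => exact Relation.TransGen.head (deltaClose_symm h) ih

lemma deltaClose_step {δ : Q → A → Set Q} {s t s' t' : Q} {a : A}
    (h : DeltaClose δ s t) (hs : s' ∈ δ s a) (ht : t' ∈ δ t a) :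
    DeltaClose δ s' t' := by
  obtain ⟨q, u, h1, h2⟩ := h
  exact ⟨q, u ++ [a], mem_extSet_step h1 hs, mem_extSet_step h2 ht⟩

lemma hc_step (M : NBW A Q) {s t s' : Q} {a : A}
    (h : Hc M.δ s t) (hs : s' ∈ M.δ s a) :
    ∀ t', t' ∈ M.δ t a → Hc M.δ s' t' := by
  induction h with
  | single h => exact fun t' ht => Relation.TransGen.single (deltaClose_step h hs ht)
  | @tail b c _ h ih =>
    intro t' ht
    obtain ⟨b', hb'⟩ := M.δ_nonempty b a
    exact (ih b' hb').trans (Relation.TransGen.single (deltaClose_step h hb' ht))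

/-- Setting of the determinization construction: `A` is an SD weak automaton;
`ρ` ranks states according to a total order on the SCCs extending the
reachability order; `rep` assigns to each state the representative of its
`H`-class, chosen in the deepest SCC intersecting the class; `δ'` is the
deterministic transition function sending `p, a` to the representative of
(the class of) some state of `δ(p,a)`. If a run `r'` of the resulting
deterministic automaton on `w` stays, from position `j` onward, inside a
rejecting SCC `C` of `A` (the SCC of `r' j`), then every run of `A` from
`r' j` on the corresponding suffix of `w` stays in `C` forever, hence is
rejecting. -/
theorem run_stuck_in_rejecting_scc [Fintype Q] (M : NBW A Q)
    (hweak : M.Weak) (hSD : M.SD)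
    (ρ : Q → ℕ)
    (hρ_mono : ∀ q q', M.Reach q q' → ρ q ≤ ρ q')
    (hρ_strict : ∀ q q', M.Reach q q' → ρ q' ≤ ρ q → M.Reach q' q)
    (rep : Q → Q)
    (hrep_equiv : ∀ q, Hc M.δ q (rep q))
    (hrep_const : ∀ q q', Hc M.δ q q' → rep q = rep q')
    (hrep_deep : ∀ q q', Hc M.δ q q' → ρ q' ≤ ρ (rep q))
    (δ' : Q → A → Q)
    (hδ' : ∀ p a, ∃ s ∈ M.δ p a, δ' p a = rep s)
    (w : ℕ → A) (r' : ℕ → Q)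
    (hr' : ∀ i, r' (i + 1) = δ' (r' i) (w i))
    (j : ℕ)
    (hstay : ∀ i, j ≤ i → M.Reach (r' i) (r' j) ∧ M.Reach (r' j) (r' i))
    (hrej : ∀ q, M.Reach q (r' j) → M.Reach (r' j) q → q ∉ M.α) :
    ∀ r : ℕ → Q, r 0 = r' j → (∀ i, r (i + 1) ∈ M.δ (r i) (w (j + i))) →
      (∀ i, M.Reach (r i) (r' j) ∧ M.Reach (r' j) (r i)) ∧
      ¬ (∃ᶠ i in atTop, r i ∈ M.α) := by
  intro r hr0 hrstep
  -- ρ of r' is constant from j on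
  have hρ_const : ∀ i, ρ (r' (j + i)) = ρ (r' j) := fun i =>
    le_antisymm (hρ_mono _ _ (hstay (j + i) (Nat.le_add_right j i)).1)
      (hρ_mono _ _ (hstay (j + i) (Nat.le_add_right j i)).2)
  -- each r i is reachable from r' j
  have hreach1 : ∀ i, M.Reach (r' j) (r i) := by
    intro i
    induction i with
    | zero => exact ⟨[], by simp [extSet, hr0]⟩
    | succ i ih => exact reach_step M ih (hrstep i)
  -- r i is Hc-related to r' (j+i) (or equal, at 0)
  have hHc : ∀ i, Hc M.δ (r i) (r' (j + i)) ∨ r i = r' (j + i) := by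
    intro i
    induction i with
    | zero => exact Or.inr hr0
    | succ i ih =>
      obtain ⟨s, hs, hδeq⟩ := hδ' (r' (j + i)) (w (j + i))
      have hrs : Hc M.δ (r (i + 1)) s := by
        rcases ih with h | h
        · exact hc_step M h (hrstep i) s hs
        · refine Relation.TransGen.single ⟨r' (j + i), [w (j + i)], ?_, ?_⟩ <;>
            simp [extSet]
          · exact h ▸ hrstep i
          · exact hs
      have : r' (j + (i + 1)) = rep s := by
        have := hr' (j + i); rw [show j + (i + 1) = j + i + 1 from rfl, this, hδeq]
      exact Or.inl (this ▸ hrs.trans (hrep_equiv s))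
  -- for i ≥ 1, rep (r (i+1)) = r' (j+i+1) and r (i+1) is Hc-related to itself
  have hkey : ∀ i, rep (r (i + 1)) = r' (j + (i + 1)) ∧ Hc M.δ (r (i + 1)) (r (i + 1)) := by
    intro i
    obtain ⟨s, hs, hδeq⟩ := hδ' (r' (j + i)) (w (j + i))
    have hrs : Hc M.δ (r (i + 1)) s := by
      rcases hHc i with h | h
      · exact hc_step M h (hrstep i) s hs
      · refine Relation.TransGen.single ⟨r' (j + i), [w (j + i)], ?_, ?_⟩ <;>
          simp [extSet]
        · exact h ▸ hrstep i
        · exact hs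
    have heq : r' (j + (i + 1)) = rep s := by
      have := hr' (j + i); rw [show j + (i + 1) = j + i + 1 from rfl, this, hδeq]
    exact ⟨(hrep_const _ _ hrs).trans heq.symm, hrs.trans (hc_symm hrs)⟩
  have hρle : ∀ i, ρ (r i) ≤ ρ (r' j) := by
    intro i
    cases i with
    | zero => exact le_of_eq (by rw [hr0])
    | succ i =>
      have h1 := hrep_deep _ _ (hkey i).2
      rw [(hkey i).1, hρ_const (i + 1)] at h1
      exact h1
  have hreach2 : ∀ i, M.Reach (r i) (r' j) := fun i =>
    hρ_strict _ _ (hreach1 i) (hρle i)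
  refine ⟨fun i => ⟨hreach2 i, hreach1 i⟩, fun hfreq => ?_⟩
  obtain ⟨i, hi⟩ := hfreq.exists
  exact hrej (r i) (hreach2 i) (hreach1 i) hi
end
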